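/- arXiv:math/0511714 — 10 statements merged into one kernel-verified Lean document; each statement's English description precedes it below -/
import Mathlib

section
/- For a group G, the following are equivalent: (i) the trivial subgroup is isolated in the space of normal subgroups of G (with the topology induced from the product topology on subsets of G); (ii) G has finitely many minimal normal subgroups and every non-trivial normal subgroup contains a minimal one; (iii) there exists a finite subset F of G \ {1} such that every non-trivial normal subgroup of G contains an element of F. -/
/-- The product topology on the power set of `G`, identifying `Set G` with
`{0,1}^G` (each factor `Prop` carrying the discrete topology). -/
def powTop (G : Type*) : TopologicalSpace (Set G) :=
  TopologicalSpace.induced (fun (A : Set G) (g : G) => g ∈ A)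
    (@Pi.topologicalSpace G (fun _ => Prop) (fun _ => ⊥))

/-- The space of normal subgroups of `G`, topologized as a subspace of the
power set of `G` with the product topology. -/
def normalTop (G : Type*) [Group G] : TopologicalSpace {N : Subgroup G // N.Normal} :=
  TopologicalSpace.induced (fun N => ((N.1 : Set G))) (powTop G)

/-- A normal subgroup `N` of `G` is a minimal normal subgroup if it is non-trivial
and every non-trivial normal subgroup contained in it equals it. -/
def IsMinimalNormal {G : Type*} [Group G] (N : Subgroup G) : Prop :=
  N.Normal ∧ N ≠ ⊥ ∧ ∀ N' : Subgroup G, N'.Normal → N' ≠ ⊥ → N' ≤ N → N' = N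

private lemma normalTop_eq (G : Type*) [Group G] :
    normalTop G = TopologicalSpace.induced
      (fun (N : {N : Subgroup G // N.Normal}) (g : G) => g ∈ (N.1 : Set G))
      (@Pi.topologicalSpace G (fun _ => Prop) (fun _ => ⊥)) := by
  rw [normalTop, powTop, induced_compose]
  rfl

/-- For a group `G`, the following are equivalent:
(i) the trivial subgroup is an isolated point in the space of normal subgroups of `G`;
(ii) `G` has finitely many minimal normal subgroups and every non-trivial normal
subgroup contains a minimal one;
(iii) there is a finite subset `F ⊆ G \ {1}` such that every non-trivial normal
subgroup of `G` contains an element of `F`. -/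
theorem finitely_discriminable_tfae (G : Type*) [Group G] :
    List.TFAE
      [ @IsOpen _ (normalTop G) {N : {N : Subgroup G // N.Normal} | N.1 = ⊥},
        ({N : Subgroup G | IsMinimalNormal N}.Finite ∧
          ∀ N : Subgroup G, N.Normal → N ≠ ⊥ →
            ∃ M : Subgroup G, IsMinimalNormal M ∧ M ≤ N),
        ∃ F : Finset G, (1 : G) ∉ F ∧
          ∀ N : Subgroup G, N.Normal → N ≠ ⊥ → ∃ g ∈ F, g ∈ N ] := by
  classical
  tfae_have 3 → 1 := by
    rintro ⟨F, h1F, hF⟩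
    letI : TopologicalSpace Prop := ⊥
    haveI : DiscreteTopology Prop := ⟨rfl⟩
    rw [normalTop_eq, isOpen_induced_iff]
    refine ⟨Set.pi ↑F (fun _ => {p : Prop | ¬ p}), ?_, ?_⟩
    · exact isOpen_set_pi F.finite_toSet
        (fun i _ => isOpen_discrete _)
    · ext N
      simp only [Set.mem_preimage, Set.mem_pi, Set.mem_setOf_eq, Finset.mem_coe]
      constructor
      · intro h
        by_contra hN
        obtain ⟨g, hgF, hgN⟩ := hF N.1 N.2 hN
        exact h g hgF hgN
      · intro h g hg
        rw [h]
        simp only [Subgroup.coe_bot, Set.mem_singleton_iff]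
        rintro rfl
        exact h1F hg
  tfae_have 1 → 3 := by
    intro h
    letI : TopologicalSpace Prop := ⊥
    rw [normalTop_eq, isOpen_induced_iff] at h
    obtain ⟨U, hU, hUeq⟩ := h
    have hbot : (fun g : G => g ∈ (((⊥ : Subgroup G) : Subgroup G) : Set G)) ∈ U := by
      have : (⟨⊥, inferInstance⟩ : {N : Subgroup G // N.Normal}) ∈
          (fun (N : {N : Subgroup G // N.Normal}) (g : G) => g ∈ (N.1 : Set G)) ⁻¹' U := by
        rw [hUeq]; exact rfl
      exact this
    rw [isOpen_pi_iff] at hU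
    obtain ⟨I, u, hu, hsub⟩ := hU _ hbot
    refine ⟨I.erase 1, Finset.notMem_erase 1 I, ?_⟩
    intro N hNn hNbot
    by_contra hc
    push_neg at hc
    have hmem : (fun g : G => g ∈ (N : Set G)) ∈ (I : Set G).pi u := by
      intro i hi
      have heq : (i ∈ (N : Set G)) = (i ∈ (((⊥ : Subgroup G) : Subgroup G) : Set G)) := by
        apply propext
        constructor
        · intro hiN
          by_cases h1 : i = 1
          · subst h1; exact Subgroup.one_mem _
          · exact absurd hiN (hc i (Finset.mem_erase.2 ⟨h1, hi⟩))
        · intro hib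
          have : i = 1 := Subgroup.mem_bot.1 hib
          subst this; exact Subgroup.one_mem _
      show (i ∈ (N : Set G)) ∈ u i
      rw [heq]
      exact (hu i (Finset.mem_coe.1 hi)).2
    have : (⟨N, hNn⟩ : {N : Subgroup G // N.Normal}) ∈
        {N : {N : Subgroup G // N.Normal} | N.1 = ⊥} := by
      rw [← hUeq]
      exact hsub hmem
    exact hNbot this
  tfae_have 3 → 2 := by
    rintro ⟨F, h1F, hF⟩
    have key : ∀ N : Subgroup G, N.Normal → N ≠ ⊥ →
        ∃ M : Subgroup G, IsMinimalNormal M ∧ M ≤ N := by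
      intro N hN hNbot
      set P : ℕ → Prop := fun n => ∃ M : Subgroup G, M.Normal ∧ M ≠ ⊥ ∧ M ≤ N ∧
        (F.filter (fun g => g ∈ M)).card = n with hP_def
      have hP : ∃ n, P n := ⟨_, N, hN, hNbot, le_refl N, rfl⟩
      obtain ⟨M, hMn, hMbot, hMN, hMcard⟩ := Nat.find_spec hP
      set S : Set (Subgroup G) := {M' | M'.Normal ∧ M' ≠ ⊥ ∧ M' ≤ M} with hS_def
      have hfilter : ∀ M' ∈ S, F.filter (fun g => g ∈ M') = F.filter (fun g => g ∈ M) := by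
        rintro M' ⟨hM'n, hM'bot, hM'M⟩
        apply Finset.eq_of_subset_of_card_le
        · intro g hg
          simp only [Finset.mem_filter] at hg ⊢
          exact ⟨hg.1, hM'M hg.2⟩
        · rw [hMcard]
          exact Nat.find_le ⟨M', hM'n, hM'bot, hM'M.trans hMN, rfl⟩
      have hKn : (sInf S).Normal := by
        constructor
        intro n hn g
        rw [Subgroup.mem_sInf] at hn ⊢
        intro H hH
        exact hH.1.conj_mem n (hn H hH) g
      obtain ⟨g0, hg0F, hg0M⟩ := hF M hMn hMbot
      have hg0ne : g0 ≠ 1 := fun h => h1F (h ▸ hg0F)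
      have hg0K : g0 ∈ sInf S := by
        rw [Subgroup.mem_sInf]
        intro H hH
        have h2 : g0 ∈ F.filter (fun g => g ∈ H) := by
          rw [hfilter H hH]
          exact Finset.mem_filter.2 ⟨hg0F, hg0M⟩
        exact (Finset.mem_filter.1 h2).2
      have hKbot : sInf S ≠ ⊥ := fun h =>
        hg0ne (Subgroup.mem_bot.1 (h ▸ hg0K))
      have hKM : sInf S ≤ M := sInf_le ⟨hMn, hMbot, le_refl M⟩
      refine ⟨sInf S, ⟨hKn, hKbot, ?_⟩, hKM.trans hMN⟩
      intro N' hN'n hN'bot hN'K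
      exact le_antisymm hN'K (sInf_le ⟨hN'n, hN'bot, hN'K.trans hKM⟩)
    refine ⟨?_, key⟩
    have hinj : Set.InjOn (fun M : Subgroup G => F.filter (fun g => g ∈ M))
        {N : Subgroup G | IsMinimalNormal N} := by
      intro M₁ h₁ M₂ h₂ heq
      obtain ⟨h₁n, h₁bot, h₁min⟩ := h₁
      obtain ⟨h₂n, h₂bot, h₂min⟩ := h₂
      simp only at heq
      obtain ⟨g, hgF, hgM₁⟩ := hF M₁ h₁n h₁bot
      have hgM₂ : g ∈ M₂ := by
        have h2 : g ∈ F.filter (fun g => g ∈ M₂) := by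
          rw [← heq]; exact Finset.mem_filter.2 ⟨hgF, hgM₁⟩
        exact (Finset.mem_filter.1 h2).2
      have hIn : (M₁ ⊓ M₂).Normal := by
        constructor
        intro n hn g'
        rw [Subgroup.mem_inf] at hn ⊢
        exact ⟨h₁n.conj_mem n hn.1 g', h₂n.conj_mem n hn.2 g'⟩
      have hIbot : (M₁ ⊓ M₂) ≠ ⊥ := by
        intro h
        have : g ∈ (⊥ : Subgroup G) := h ▸ Subgroup.mem_inf.2 ⟨hgM₁, hgM₂⟩
        exact h1F ((Subgroup.mem_bot.1 this) ▸ hgF)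
      have e₁ : M₁ ⊓ M₂ = M₁ := h₁min _ hIn hIbot inf_le_left
      have e₂ : M₁ ⊓ M₂ = M₂ := h₂min _ hIn hIbot inf_le_right
      rw [← e₁, e₂]
    apply Set.Finite.of_finite_image _ hinj
    apply Set.Finite.subset (F.powerset : Finset (Finset G)).finite_toSet
    rintro s ⟨M, _, rfl⟩
    simp only [Finset.coe_powerset, Set.mem_preimage, Set.mem_powerset_iff,
      Finset.coe_subset, Finset.mem_coe]
    exact Finset.filter_subset _ _
  tfae_have 2 → 3 := by
    rintro ⟨hfin, hmin⟩
    have hchoice : ∀ M : Subgroup G, IsMinimalNormal M → ∃ g : G, g ∈ M ∧ g ≠ 1 := by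
      rintro M ⟨_, hMbot, _⟩
      by_contra h
      push_neg at h
      exact hMbot ((Subgroup.eq_bot_iff_forall M).2 h)
    set f : Subgroup G → G := fun M =>
      if h : ∃ g : G, g ∈ M ∧ g ≠ 1 then h.choose else 1 with hf_def
    refine ⟨hfin.toFinset.image f, ?_, ?_⟩
    · intro h1
      obtain ⟨M, hM, hfM⟩ := Finset.mem_image.1 h1
      have hMmin : IsMinimalNormal M := hfin.mem_toFinset.1 hM
      have hex := hchoice M hMmin
      rw [hf_def] at hfM
      simp only [dif_pos hex] at hfM
      exact hex.choose_spec.2 hfM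
    · intro N hNn hNbot
      obtain ⟨M, hMmin, hMN⟩ := hmin N hNn hNbot
      have hex := hchoice M hMmin
      refine ⟨f M, Finset.mem_image_of_mem f (hfin.mem_toFinset.2 hMmin), ?_⟩
      rw [hf_def]
      simp only [dif_pos hex]
      exact hMN hex.choose_spec.1
  tfae_finish
end

section
/- An abelian group G is finitely discriminable (i.e., there is a finite subset of G \ {0} meeting every non-trivial subgroup) if and only if G is artinian, i.e., every descending chain of subgroups stabilizes. -/
/-- An abelian group is finitely discriminable if there is a finite subset of
`G \ {0}` meeting every non-trivial subgroup. -/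
def AddFinDisc (G : Type*) [AddCommGroup G] : Prop :=
  ∃ F : Finset G, (0 : G) ∉ F ∧ ∀ H : AddSubgroup G, H ≠ ⊥ → ∃ g ∈ F, g ∈ H

/-- An abelian group is artinian if every descending sequence of subgroups
eventually stabilizes. -/
def AddArtinian (G : Type*) [AddCommGroup G] : Prop :=
  ∀ f : ℕ → AddSubgroup G, (∀ n, f (n + 1) ≤ f n) → ∃ n, ∀ m, n ≤ m → f m = f n

/-!
Both conditions force `G` to be torsion, and a torsion group is finitely discriminable exactly
when it has finitely many elements of prime order: every non-trivial subgroup contains one, and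
each generates an atom of the subgroup lattice.

In an artinian group these elements span a semisimple artinian, hence finitely generated and so
finite, subgroup.

Conversely, finite discriminability passes to quotients `G ⧸ H`: prime orders lift to `G`, and
the `q`-torsion of `G ⧸ H` is no larger than that of `G`, because on a finite abelian group the
kernel and the cokernel of `q • ·` have the same size. A descending chain with intersection `H`
becomes in `G ⧸ H` a chain with trivial intersection, which reaches `⊥` once it has lost each of
the finitely many discriminating elements.
-/

open AddSubgroup

section

variable {G : Type*} [AddCommGroup G]

theorem isAtom_zmultiples_of_prime {x : G} (hx : (addOrderOf x).Prime) :
    IsAtom (zmultiples x) := by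
  have : Finite (zmultiples x) :=
    Nat.finite_of_card_ne_zero (by rw [Nat.card_zmultiples]; exact hx.ne_zero)
  refine ⟨?_, fun K hK => ?_⟩
  · rw [Ne, ← card_eq_one, Nat.card_zmultiples]
    exact hx.one_lt.ne'
  · have hdvd := card_dvd_of_le hK.le
    rw [Nat.card_zmultiples, Nat.dvd_prime hx] at hdvd
    rcases hdvd with h | h
    · exact card_eq_one.mp h
    · exact absurd (eq_of_le_of_card_ge hK.le (by rw [h, Nat.card_zmultiples])) hK.ne

theorem exists_prime_addOrderOf_mem (hG : IsAddTorsion G) {H : AddSubgroup G} (hH : H ≠ ⊥) :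
    ∃ x ∈ H, (addOrderOf x).Prime := by
  obtain ⟨x, hxH, hx0⟩ := H.bot_or_exists_ne_zero.resolve_left hH
  have hx1 : addOrderOf x ≠ 1 := by rwa [Ne, AddMonoid.addOrderOf_eq_one_iff]
  refine ⟨(addOrderOf x / (addOrderOf x).minFac) • x, H.nsmul_mem hxH _, ?_⟩
  rw [addOrderOf_nsmul_addOrderOf_sub (hG x).addOrderOf_pos.ne' (Nat.minFac_dvd _)]
  exact Nat.minFac_prime hx1

theorem exists_addOrderOf_eq_of_surjective {L : Type*} [AddCommGroup L] {φ : G →+ L}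
    (hφ : Function.Surjective φ) (hG : IsAddTorsion G) (y : L) :
    ∃ x : G, addOrderOf x = addOrderOf y := by
  obtain ⟨g, rfl⟩ := hφ y
  exact ⟨(addOrderOf g / addOrderOf (φ g)) • g,
    addOrderOf_nsmul_addOrderOf_sub (hG g).addOrderOf_pos.ne' (addOrderOf_map_dvd φ g)⟩

theorem coe_torsionBy_prime_subset {p : ℕ} (hp : p.Prime) :
    (torsionBy G p : Set G) ⊆ insert 0 {x : G | (addOrderOf x).Prime} := by
  intro x hx
  have hdvd : addOrderOf x ∣ p :=
    addOrderOf_dvd_of_nsmul_eq_zero (torsionBy.nsmul_iff.mp (by exact_mod_cast hx))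
  rcases (Nat.dvd_prime hp).mp hdvd with h | h
  · exact Or.inl (AddMonoid.addOrderOf_eq_one_iff.mp h)
  · exact Or.inr (show (addOrderOf x).Prime from h ▸ hp)

theorem addFinDisc_of_finite_setOf_prime (hG : IsAddTorsion G)
    (hS : {x : G | (addOrderOf x).Prime}.Finite) : AddFinDisc G :=
  ⟨hS.toFinset, by simp [Nat.not_prime_one], fun _ hH => by
    simpa [and_comm] using exists_prime_addOrderOf_mem hG hH⟩

theorem antitone_zmultiples_two_pow_zsmul (x : G) :
    Antitone fun n : ℕ => zmultiples ((2 ^ n : ℤ) • x) := by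
  intro m n hmn
  obtain ⟨c, hc⟩ := pow_dvd_pow (2 : ℤ) hmn
  rw [zmultiples_le, hc, mul_comm, mul_zsmul]
  exact zsmul_mem (mem_zmultiples _) c

theorem iInf_zmultiples_two_pow_zsmul_eq_bot {x : G} (hx : ¬IsOfFinAddOrder x) :
    ⨅ n : ℕ, zmultiples ((2 ^ n : ℤ) • x) = ⊥ := by
  have hinj := injective_zsmul_iff_not_isOfFinAddOrder.mpr hx
  refine eq_bot_iff.mpr fun y hy => ?_
  obtain ⟨k, rfl⟩ := mem_zmultiples_iff.mp (by simpa using mem_iInf.mp hy 0)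
  obtain ⟨m, hm⟩ := mem_zmultiples_iff.mp (mem_iInf.mp hy k.natAbs)
  rw [smul_smul] at hm
  have hdvd : (2 : ℤ) ^ k.natAbs ∣ k := ⟨m, by rw [mul_comm]; exact (hinj hm).symm⟩
  rw [Int.eq_zero_of_dvd_of_natAbs_lt_natAbs hdvd (by simpa using Nat.lt_two_pow_self),
    zero_zsmul, mem_bot]

theorem card_le_card_torsionBy_of_surjective {K L : Type*} [AddCommGroup K] [AddCommGroup L]
    [Finite K] {φ : K →+ L} (hφ : Function.Surjective φ) {q : ℕ} (hL : ∀ y : L, q • y = 0) :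
    Nat.card L ≤ Nat.card (torsionBy K q) := by
  have hker : (nsmulAddMonoidHom q : K →+ K).ker = torsionBy K q := by
    ext x
    simp
  have hrange : (nsmulAddMonoidHom q : K →+ K).range ≤ φ.ker := by
    rintro _ ⟨x, rfl⟩
    simp [hL]
  calc Nat.card L = φ.ker.index := by
        rw [index_eq_card,
          Nat.card_congr (QuotientAddGroup.quotientKerEquivOfSurjective φ hφ).toEquiv]
    _ ≤ (nsmulAddMonoidHom q : K →+ K).range.index := index_antitone hrange
    _ = Nat.card (torsionBy K q) := by rw [index_range, hker]

theorem finite_torsionBy_quotient (hG : IsAddTorsion G) {q : ℕ}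
    (hq : (torsionBy G q : Set G).Finite) (H : AddSubgroup G) :
    (torsionBy (G ⧸ H) q : Set (G ⧸ H)).Finite := by
  classical
  have : Finite (torsionBy G q) := hq.to_subtype
  set π := QuotientAddGroup.mk' H
  have hbound (t : Finset (G ⧸ H)) (ht : (t : Set (G ⧸ H)) ⊆ torsionBy (G ⧸ H) q) :
      t.card ≤ Nat.card (torsionBy G q) := by
    set K := closure ((t.image Quotient.out : Finset G) : Set G)
    have : AddGroup.FG K := (AddGroup.fg_iff_addSubgroup_fg K).mpr ⟨_, rfl⟩
    have : Finite K := AddCommGroup.finite_of_fg_isAddTorsion K (hG.addSubgroup K)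
    have ht_map : (t : Set (G ⧸ H)) ⊆ K.map π := fun y hy =>
      ⟨y.out, subset_closure (Finset.mem_image_of_mem _ hy), QuotientAddGroup.out_eq' y⟩
    have hmap_tors : K.map π ≤ torsionBy (G ⧸ H) q := by
      rw [map_le_iff_le_comap, closure_le]
      intro x hx
      obtain ⟨y, hy, rfl⟩ := Finset.mem_image.mp hx
      simpa [π] using ht hy
    calc t.card = Nat.card (t : Set (G ⧸ H)) := by simp
      _ ≤ Nat.card (K.map π) :=
          Nat.card_mono (by rw [coe_map]; exact (Set.toFinite _).image _) ht_map
      _ ≤ Nat.card (torsionBy K q) := card_le_card_torsionBy_of_surjective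
          (π.addSubgroupMap_surjective K) fun y =>
            Subtype.ext (by simpa using torsionBy.nsmul_iff.mp (hmap_tors y.2))
      _ = Nat.card ((torsionBy K q).map K.subtype) :=
          (card_map_of_injective K.subtype_injective).symm
      _ ≤ Nat.card (torsionBy G q) := card_le_of_le <| by
          rintro _ ⟨x, hx, rfl⟩
          simpa [torsionBy.nsmul_iff] using congrArg Subtype.val (torsionBy.nsmul_iff.mp hx)
  by_contra hinf
  obtain ⟨t, hts, hcard⟩ := Set.Infinite.exists_subset_card_eq hinf (Nat.card (torsionBy G q) + 1)
  have := hbound t hts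
  omega

namespace AddFinDisc

theorem exists_eq_bot_of_iInf_eq_bot (h : AddFinDisc G) {f : ℕ → AddSubgroup G}
    (hf : Antitone f) (hinf : ⨅ n, f n = ⊥) : ∃ n, f n = ⊥ := by
  obtain ⟨F, hF0, hF⟩ := h
  have hleave : ∀ a ∈ F, ∃ n, a ∉ f n := by
    intro a ha
    by_contra! hall
    have : a ∈ ⨅ n, f n := mem_iInf.mpr hall
    rw [hinf, mem_bot] at this
    exact hF0 (this ▸ ha)
  choose! N hN using hleave
  refine ⟨F.sup N, by_contra fun hne => ?_⟩
  obtain ⟨a, ha, haf⟩ := hF _ hne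
  exact hN a ha (hf (Finset.le_sup ha) haf)

theorem isAddTorsion (h : AddFinDisc G) : IsAddTorsion G := by
  intro x
  by_contra hx
  obtain ⟨n, hn⟩ := h.exists_eq_bot_of_iInf_eq_bot (antitone_zmultiples_two_pow_zsmul x)
    (iInf_zmultiples_two_pow_zsmul_eq_bot hx)
  exact hx (isOfFinAddOrder_iff_zsmul_eq_zero.mpr ⟨2 ^ n, by positivity, zmultiples_eq_bot.mp hn⟩)

theorem finite_setOf_prime_addOrderOf (h : AddFinDisc G) :
    {x : G | (addOrderOf x).Prime}.Finite := by
  have hG := h.isAddTorsion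
  obtain ⟨F, hF0, hF⟩ := h
  refine (F.finite_toSet.biUnion fun a _ => (hG a).finite_zmultiples).subset fun x hx => ?_
  have hatom := isAtom_zmultiples_of_prime hx
  obtain ⟨a, haF, hax⟩ := hF _ hatom.ne_bot
  have ha0 : zmultiples a ≠ ⊥ := zmultiples_eq_bot.not.mpr fun ha => hF0 (ha ▸ haF)
  have hax : zmultiples a = zmultiples x :=
    (hatom.le_iff.mp (zmultiples_le.mpr hax)).resolve_left ha0
  exact Set.mem_biUnion haF (hax ▸ mem_zmultiples x)

theorem quotient (h : AddFinDisc G) (H : AddSubgroup G) : AddFinDisc (G ⧸ H) := by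
  have hG := h.isAddTorsion
  have hS := h.finite_setOf_prime_addOrderOf
  have hπ := QuotientAddGroup.mk'_surjective H
  have htors : ∀ q ∈ addOrderOf '' {x : G | (addOrderOf x).Prime},
      (torsionBy (G ⧸ H) q : Set (G ⧸ H)).Finite := by
    rintro _ ⟨x, hx, rfl⟩
    exact finite_torsionBy_quotient hG ((hS.insert 0).subset (coe_torsionBy_prime_subset hx)) H
  refine addFinDisc_of_finite_setOf_prime (hG.of_surjective hπ)
    (((hS.image addOrderOf).biUnion htors).subset fun y hy => ?_)
  obtain ⟨x, hxy⟩ := exists_addOrderOf_eq_of_surjective hπ hG y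
  refine Set.mem_biUnion ⟨x, ?_, hxy⟩ ?_
  · exact show (addOrderOf x).Prime from hxy ▸ hy
  · exact torsionBy.nsmul_iff.mpr (addOrderOf_nsmul_eq_zero y)

theorem addArtinian (h : AddFinDisc G) : AddArtinian G := by
  intro f hf
  have hanti : Antitone f := antitone_nat_of_succ_le hf
  set H := ⨅ n, f n
  set π := QuotientAddGroup.mk' H
  have hHf n : H ≤ f n := iInf_le f n
  have hinf : ⨅ n, (f n).map π = ⊥ := by
    refine eq_bot_iff.mpr fun y hy => ?_
    obtain ⟨g, rfl⟩ := QuotientAddGroup.mk'_surjective H y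
    have hg n : g ∈ f n := by
      have := mem_comap.mpr (mem_iInf.mp hy n)
      rwa [comap_map_eq, QuotientAddGroup.ker_mk', sup_of_le_left (hHf n)] at this
    exact mem_bot.mpr ((QuotientAddGroup.eq_zero_iff g).mpr (mem_iInf.mpr hg))
  obtain ⟨n, hn⟩ :=
    (h.quotient H).exists_eq_bot_of_iInf_eq_bot (fun m n hmn => map_mono (hanti hmn)) hinf
  have hfn : f n = H := le_antisymm
    (by simpa [π, QuotientAddGroup.ker_mk'] using (map_eq_bot_iff (f n)).mp hn) (hHf n)
  exact ⟨n, fun m hm => le_antisymm (hfn ▸ hanti hm) (hfn ▸ hHf m)⟩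

end AddFinDisc

theorem isAddTorsion_of_isArtinian [IsArtinian ℤ G] : IsAddTorsion G := by
  intro x
  obtain ⟨n, y, hy⟩ := IsArtinian.exists_pow_succ_smul_dvd (2 : ℤ)
    (⟨x, Submodule.mem_span_singleton_self x⟩ : ℤ ∙ x)
  obtain ⟨k, hk⟩ := Submodule.mem_span_singleton.mp y.2
  have hkx : (2 ^ (n + 1) * k - 2 ^ n) • x = 0 := by
    have := congrArg Subtype.val hy
    simp only [Submodule.coe_smul, ← hk, smul_smul] at this
    simp [sub_zsmul, this]
  refine isOfFinAddOrder_iff_zsmul_eq_zero.mpr ⟨_, ?_, hkx⟩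
  rw [show (2 ^ (n + 1) * k - 2 ^ n : ℤ) = 2 ^ n * (2 * k - 1) by ring]
  exact mul_ne_zero (pow_ne_zero n two_ne_zero) (by omega)

theorem isSimpleModule_span_singleton_of_prime {x : G} (hx : (addOrderOf x).Prime) :
    IsSimpleModule ℤ (ℤ ∙ x) := by
  rw [isSimpleModule_iff_isAtom, ← Submodule.toAddSubgroup_toIntSubmodule (ℤ ∙ x),
    AddSubgroup.toIntSubmodule.isAtom_iff, Submodule.span_singleton_toAddSubgroup_eq_zmultiples]
  exact isAtom_zmultiples_of_prime hx

theorem finite_setOf_prime_addOrderOf_of_isArtinian [IsArtinian ℤ G] :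
    {x : G | (addOrderOf x).Prime}.Finite := by
  set N := ⨆ x ∈ {x : G | (addOrderOf x).Prime}, ℤ ∙ x
  have : IsSemisimpleModule ℤ N := isSemisimpleModule_biSup_of_isSemisimpleModule_submodule
    fun x hx => have := isSimpleModule_span_singleton_of_prime hx; inferInstance
  have : Module.Finite ℤ N :=
    ((IsSemisimpleModule.finite_tfae (R := ℤ) (M := N)).out 2 0).mp (inferInstance : IsArtinian ℤ N)
  have : AddGroup.FG N := Module.Finite.iff_addGroup_fg.mp this
  have : Finite N := AddCommGroup.finite_of_fg_isAddTorsion N isAddTorsion_of_isArtinian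
  exact (Set.finite_range ((↑) : N → G)).subset fun x hx =>
    ⟨⟨x, le_biSup (fun x => ℤ ∙ x) hx (Submodule.mem_span_singleton_self x)⟩, rfl⟩

namespace AddArtinian

theorem wellFoundedLT (h : AddArtinian G) : WellFoundedLT (AddSubgroup G) := by
  refine (wellFoundedGT_iff_monotone_chain_condition (α := (AddSubgroup G)ᵒᵈ)).mpr fun a => ?_
  obtain ⟨n, hn⟩ := h (fun n => OrderDual.ofDual (a n)) fun n => a.monotone n.le_succ
  exact ⟨n, fun m hm => (hn m hm).symm⟩

theorem isArtinian (h : AddArtinian G) : IsArtinian ℤ G :=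
  have := h.wellFoundedLT
  AddSubgroup.toIntSubmodule.symm.strictMono.wellFoundedLT

theorem addFinDisc (h : AddArtinian G) : AddFinDisc G :=
  have := h.isArtinian
  addFinDisc_of_finite_setOf_prime isAddTorsion_of_isArtinian
    finite_setOf_prime_addOrderOf_of_isArtinian

end AddArtinian

end

/-- An abelian group is finitely discriminable if and only if it is artinian. -/
theorem addFinDisc_iff_addArtinian (G : Type*) [AddCommGroup G] :
    AddFinDisc G ↔ AddArtinian G :=
  ⟨AddFinDisc.addArtinian, AddArtinian.addFinDisc⟩
end

section
/- A hypercentral group G is finitely discriminable if and only if its centre Z(G) is finitely discriminable. -/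
/-- A group `G` is finitely discriminable if there is a finite subset
`F ⊆ G \ {1}` such that every non-trivial normal subgroup of `G` contains an
element of `F`. -/
def FinDisc (G : Type*) [Group G] : Prop :=
  ∃ F : Finset G, (1 : G) ∉ F ∧ ∀ N : Subgroup G, N.Normal → N ≠ ⊥ → ∃ g ∈ F, g ∈ N

/-- A group `G` is hypercentral if its transfinite ascending central series
reaches `G` at some ordinal. -/
def IsHypercentral (G : Type*) [Group G] : Prop :=
  ∃ (a : Ordinal.{0}) (Z : Ordinal.{0} → Subgroup G),
    Z 0 = ⊥ ∧
    (∀ b : Ordinal.{0}, ∀ x : G, x ∈ Z (Order.succ b) ↔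
        ∀ g : G, x * g * x⁻¹ * g⁻¹ ∈ Z b) ∧
    (∀ b : Ordinal.{0}, Order.IsSuccLimit b → Z b = ⨆ c : {c : Ordinal.{0} // c < b}, Z c.1) ∧
    Z a = ⊤

/-!
A central subgroup inherits finite discriminability from `G`, since all its subgroups are normal
in `G`. Conversely, if every non-trivial normal subgroup of `G` meets a subgroup `H`
non-trivially, then a finite discriminating set of `H` also discriminates `G`. In a hypercentral
group this holds for `H = Z(G)`: a non-trivial element `x` of a normal subgroup `N` lying in the
`(b+1)`-st centre either is central or has a non-trivial commutator `⁅x, g⁆ ∈ N` in the `b`-th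
centre, so transfinite induction along the central series produces a non-trivial central element
of `N`.
-/

open Subgroup
open scoped commutatorElement

section FinDisc

variable {G : Type*} [Group G]

theorem Subgroup.normal_of_le_center {K : Subgroup G} (hK : K ≤ center G) : K.Normal where
  conj_mem n hn g := by rwa [mem_center_iff.mp (hK hn) g, mul_inv_cancel_right]

theorem Subgroup.Normal.commutatorElement_mem {N : Subgroup G} (hN : N.Normal) {x : G}
    (hx : x ∈ N) (g : G) : ⁅x, g⁆ ∈ N :=
  commutator_le_left N ⊤ (commutator_mem_commutator hx (mem_top g))

theorem FinDisc.of_le_center {H : Subgroup G} (hH : H ≤ center G) (h : FinDisc G) :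
    FinDisc H := by
  obtain ⟨F, hF1, hF⟩ := h
  refine ⟨F.preimage Subtype.val Subtype.val_injective.injOn, by simpa using hF1, ?_⟩
  intro M _ hM
  have hMH : (M.map H.subtype).Normal := normal_of_le_center ((map_subtype_le M).trans hH)
  have hMbot : M.map H.subtype ≠ ⊥ := by
    rwa [Ne, map_eq_bot_iff_of_injective M H.subtype_injective]
  obtain ⟨_, hgF, m, hm, rfl⟩ := hF _ hMH hMbot
  exact ⟨m, Finset.mem_preimage.mpr hgF, hm⟩

theorem FinDisc.of_forall_not_disjoint {H : Subgroup G}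
    (hH : ∀ N : Subgroup G, N.Normal → N ≠ ⊥ → ¬Disjoint N H) (h : FinDisc H) : FinDisc G := by
  classical
  obtain ⟨F, hF1, hF⟩ := h
  refine ⟨F.image Subtype.val, by simpa using hF1, fun N hN hNbot => ?_⟩
  obtain ⟨m, hmF, hmN⟩ := hF (N.subgroupOf H) inferInstance
    (subgroupOf_eq_bot.not.mpr (hH N hN hNbot))
  exact ⟨m, Finset.mem_image_of_mem _ hmF, hmN⟩

end FinDisc

section Hypercentral

variable {G : Type*} [Group G]

structure IsTransfiniteUpperCentralSeries (Z : Ordinal.{0} → Subgroup G) : Prop where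
  zero : Z 0 = ⊥
  mem_succ : ∀ b x, x ∈ Z (Order.succ b) ↔ ∀ g : G, x * g * x⁻¹ * g⁻¹ ∈ Z b
  limit : ∀ b, Order.IsSuccLimit b → Z b = ⨆ c : {c // c < b}, Z c.1

namespace IsTransfiniteUpperCentralSeries

variable {Z : Ordinal.{0} → Subgroup G} (hZ : IsTransfiniteUpperCentralSeries Z)
include hZ

theorem mem_succ_iff {b : Ordinal.{0}} {x : G} : x ∈ Z (Order.succ b) ↔ ∀ g, ⁅x, g⁆ ∈ Z b := by
  simp only [hZ.mem_succ, commutatorElement_def]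

theorem normal (b : Ordinal.{0}) : (Z b).Normal := by
  induction b using Ordinal.limitRecOn with
  | zero => exact hZ.zero ▸ normal_bot
  | add_one d ih =>
    rw [← Order.succ_eq_add_one]
    refine ⟨fun x hx g => hZ.mem_succ_iff.mpr fun h => ?_⟩
    have hconj : ⁅g * x * g⁻¹, h⁆ = g * ⁅x, g⁻¹ * h * g⁆ * g⁻¹ := by group
    exact hconj ▸ ih.conj_mem _ (hZ.mem_succ_iff.mp hx _) g
  | limit b hb ih =>
    have := fun c : {c // c < b} => ih c.1 c.2
    exact hZ.limit b hb ▸ iSup_normal _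

theorem le_succ (b : Ordinal.{0}) : Z b ≤ Z (Order.succ b) :=
  fun _ hx => hZ.mem_succ_iff.mpr ((hZ.normal b).commutatorElement_mem hx)

theorem monotone : Monotone Z := by
  intro c b hcb
  induction b using Ordinal.limitRecOn generalizing c with
  | zero => rw [nonpos_iff_eq_zero.mp hcb]
  | add_one d ih =>
    rw [← Order.succ_eq_add_one] at hcb ⊢
    rcases Order.le_succ_iff_eq_or_le.mp hcb with rfl | hcd
    · exact le_rfl
    · exact (ih hcd).trans (hZ.le_succ d)
  | limit b hb _ =>
    rcases hcb.eq_or_lt with rfl | hcb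
    · exact le_rfl
    · rw [hZ.limit b hb]
      exact le_iSup (fun c : {c // c < b} => Z c.1) ⟨c, hcb⟩

theorem disjoint_of_disjoint_center {N : Subgroup G} (hN : N.Normal)
    (hNZ : Disjoint N (center G)) (b : Ordinal.{0}) : Disjoint N (Z b) := by
  induction b using Ordinal.limitRecOn with
  | zero => exact hZ.zero ▸ disjoint_bot_right
  | add_one d ih =>
    rw [← Order.succ_eq_add_one]
    refine disjoint_def.mpr fun hxN hxZ => disjoint_def.mp hNZ hxN (mem_center_iff.mpr ?_)
    intro g
    have hcomm := disjoint_def.mp ih (hN.commutatorElement_mem hxN g) (hZ.mem_succ_iff.mp hxZ g)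
    exact (commutatorElement_eq_one_iff_mul_comm.mp hcomm).symm
  | limit b hb ih =>
    have hdir : Directed (· ≤ ·) fun c : {c // c < b} => Z c.1 :=
      (hZ.monotone.comp (Subtype.mono_coe _)).directed_le
    have : Nonempty {c // c < b} := ⟨⟨0, hb.bot_lt⟩⟩
    refine disjoint_def.mpr fun hxN hxZ => ?_
    rw [hZ.limit b hb, mem_iSup_of_directed hdir] at hxZ
    obtain ⟨c, hxc⟩ := hxZ
    exact disjoint_def.mp (ih c.1 c.2) hxN hxc

end IsTransfiniteUpperCentralSeries

theorem IsHypercentral.not_disjoint_center (hG : IsHypercentral G) {N : Subgroup G}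
    (hN : N.Normal) (hNbot : N ≠ ⊥) : ¬Disjoint N (center G) := by
  obtain ⟨a, Z, h0, hsucc, hlim, htop⟩ := hG
  intro hNZ
  have hZ : IsTransfiniteUpperCentralSeries Z := ⟨h0, hsucc, hlim⟩
  exact hNbot (disjoint_top.mp (htop ▸ hZ.disjoint_of_disjoint_center hN hNZ a))

end Hypercentral

/-- A hypercentral group is finitely discriminable if and only if its centre is
finitely discriminable. -/
theorem hypercentral_finDisc_iff_center {G : Type*} [Group G]
    (hG : IsHypercentral G) : FinDisc G ↔ FinDisc (Subgroup.center G) :=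
  ⟨FinDisc.of_le_center le_rfl,
    FinDisc.of_forall_not_disjoint fun _ hN hNbot => hG.not_disjoint_center hN hNbot⟩
end

section
/- Let 1 → K → G → Q → 1 be an extension of groups, with K a normal subgroup of G. Then G is finitely discriminable if and only if both K and the centralizer C_G(K) are G-finitely discriminable, i.e., each has a finite subset of non-identity elements meeting every non-trivial G-invariant subgroup contained in it. -/
/-- A subgroup `H` of `G` is `G`-finitely discriminable if there is a finite set
`F ⊆ H \ {1}` such that every non-trivial subgroup of `H` that is normal in `G`
contains an element of `F`. -/
def GFinDisc {G : Type*} [Group G] (H : Subgroup G) : Prop :=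
  ∃ F : Finset G, (1 : G) ∉ F ∧ (∀ g ∈ F, g ∈ H) ∧
    ∀ N : Subgroup G, N.Normal → N ≤ H → N ≠ ⊥ → ∃ g ∈ F, g ∈ N

lemma gFinDisc_of_finDisc {G : Type*} [Group G] (H : Subgroup G) (h : FinDisc G) :
    GFinDisc H := by
  classical
  obtain ⟨F, h1, hF⟩ := h
  refine ⟨F.filter (· ∈ H), by simp [h1], fun g hg => (Finset.mem_filter.mp hg).2,
    fun N hN hNH hNbot => ?_⟩
  obtain ⟨g, hgF, hgN⟩ := hF N hN hNbot
  exact ⟨g, Finset.mem_filter.mpr ⟨hgF, hNH hgN⟩, hgN⟩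

/-- Given an extension `1 → K → G → Q → 1`, the group `G` is finitely
discriminable if and only if both `K` and the centralizer `C_G(K)` are
`G`-finitely discriminable. -/
theorem finDisc_iff_normal_and_centralizer {G : Type*} [Group G]
    (K : Subgroup G) (hK : K.Normal) :
    FinDisc G ↔ (GFinDisc K ∧ GFinDisc (Subgroup.centralizer (K : Set G))) := by
  constructor
  · intro h
    exact ⟨gFinDisc_of_finDisc _ h, gFinDisc_of_finDisc _ h⟩
  · classical
    rintro ⟨⟨F₁, h1₁, hF₁K, hF₁⟩, ⟨F₂, h1₂, hF₂C, hF₂⟩⟩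
    refine ⟨F₁ ∪ F₂, by simp [h1₁, h1₂], fun N hN hNbot => ?_⟩
    by_cases hcase : N ⊓ K = ⊥
    · -- N is disjoint from K, hence N ≤ C_G(K)
      have hdis : Disjoint N K := disjoint_iff.mpr hcase
      have hNC : N ≤ Subgroup.centralizer (K : Set G) := by
        intro n hn
        rw [Subgroup.mem_centralizer_iff]
        intro k hk
        exact (Subgroup.commute_of_normal_of_disjoint N K hN hK hdis n k hn hk).symm
      obtain ⟨g, hgF, hgN⟩ := hF₂ N hN hNC hNbot
      exact ⟨g, Finset.mem_union_right _ hgF, hgN⟩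
    · have hinf : (N ⊓ K).Normal := ⟨fun n hn g => ⟨hN.conj_mem _ hn.1 g, hK.conj_mem _ hn.2 g⟩⟩
      obtain ⟨g, hgF, hgN⟩ := hF₁ (N ⊓ K) hinf inf_le_right hcase
      exact ⟨g, Finset.mem_union_left _ hgF, hgN.1⟩
end

section
/- Let G be a group, K a normal subgroup, and suppose K is G-finitely discriminable and the induced map G/K → Out(K) is injective. Then G is finitely discriminable. -/
/-!
A nontrivial normal subgroup `N` of `G` meeting `K` trivially would commute with `K`, so it
would act on `K` by the trivial (in particular inner) automorphism; injectivity of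
`G/K → Out(K)` then forces `N ≤ K`, i.e. `N = N ⊓ K = ⊥`. Hence every nontrivial normal
subgroup of `G` contains a nontrivial subgroup of `K` normal in `G`, and the finite set
discriminating `K` discriminates `G`.
-/

namespace Subgroup

variable {G : Type*} [Group G] {K N : Subgroup G}

theorem centralizer_le_of_forall_conj_eq_inner
    (hout : ∀ g : G, (∃ k ∈ K, ∀ x ∈ K, g * x * g⁻¹ = k * x * k⁻¹) → g ∈ K) :
    centralizer (K : Set G) ≤ K := fun g hg =>
  hout g ⟨1, K.one_mem, fun x hx => by
    rw [← mem_centralizer_iff.mp hg x hx, mul_inv_cancel_right, one_mul, inv_one, mul_one]⟩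

theorem inf_ne_bot_of_centralizer_le (hN : N.Normal) (hK : K.Normal)
    (hcent : centralizer (K : Set G) ≤ K) (hN_ne : N ≠ ⊥) : N ⊓ K ≠ ⊥ := by
  intro hNK
  have hN_cent : N ≤ centralizer (K : Set G) := fun n hn =>
    mem_centralizer_iff.mpr fun x hx =>
      (commute_of_normal_of_disjoint N K hN hK (disjoint_iff.mpr hNK) n x hn hx).symm
  exact hN_ne (by rw [← inf_of_le_left (hN_cent.trans hcent), hNK])

end Subgroup

/-- If `K` is a normal subgroup of `G` which is `G`-finitely discriminable, and
the induced map `G/K → Out(K)` is injective (i.e. any `g ∈ G` acting on `K` by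
conjugation as an inner automorphism of `K` lies in `K`), then `G` is finitely
discriminable. -/
theorem finDisc_of_out_injective {G : Type*} [Group G]
    (K : Subgroup G) (hK : K.Normal) (hfd : GFinDisc K)
    (hout : ∀ g : G, (∃ k ∈ K, ∀ x ∈ K, g * x * g⁻¹ = k * x * k⁻¹) → g ∈ K) :
    FinDisc G := by
  obtain ⟨F, h1, -, hF⟩ := hfd
  refine ⟨F, h1, fun N hN hN_ne => ?_⟩
  have hNK_ne := Subgroup.inf_ne_bot_of_centralizer_le hN hK
    (Subgroup.centralizer_le_of_forall_conj_eq_inner hout) hN_ne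
  obtain ⟨g, hgF, hgN, -⟩ := hF (N ⊓ K) (Subgroup.normal_inf_normal N K) inf_le_right hNK_ne
  exact ⟨g, hgF, hgN⟩
end

section
/- The class of finitely discriminable groups is closed under extensions: if 1 → K → G → Q → 1 is exact with K and Q finitely discriminable, then G is finitely discriminable. -/
/-!
If a nontrivial normal subgroup `N` of `G` meets `K`, then `N ⊓ K` is a nontrivial normal
subgroup of `K` and contains an element of the finite set attached to `K`. Otherwise `N`
centralizes `K` and embeds into `G ⧸ K`, where its image contains one of the finitely many minimal
normal subgroups `M`; then `N ⊓ π⁻¹(M)` is a normal lift of `M`, i.e. a normal subgroup meeting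
`K` trivially and mapping onto `M`.

Two distinct lifts `L, L₀` of a minimal `M` intersect trivially, and `(L ⊔ L₀) ⊓ K` is a
nontrivial subgroup of the centre `Z(K)`. Every subgroup of `Z(K)` is normal in `K`, so `Z(K)` is
torsion, has finite `p`-torsion for every prime `p`, and all its nontrivial subgroups contain an
element of order `p` for `p` in a fixed finite set `P`. Decomposing such an element along
`L ⊔ L₀` yields an element of order `p` of `L` lying in `Z(K)[p] * L₀[p]`. Once a second lift
`L₁ ≠ L₀` exists, `L₀[p]` is finite: multiplying `b ∈ L₀[p]` by the element of `L₁` with the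
same image as `b⁻¹` embeds it into `Z(K)[p]`. So one element of `L₀` together with these finite
sets meets every lift of `M`.
-/

open Subgroup
open scoped Pointwise

section Torsion

variable {G : Type*} [Group G] {A : Subgroup G} {F : Set G}

theorem isOfFinOrder_of_forall_ne_bot_exists_mem (hF : F.Finite) (hF1 : 1 ∉ F)
    (hA : ∀ S ≤ A, S ≠ ⊥ → ∃ f ∈ F, f ∈ S) {z : G} (hz : z ∈ A) : IsOfFinOrder z := by
  by_contra hz_inf
  have hinj : Function.Injective (z ^ · : ℤ → G) :=
    injective_zpow_iff_not_isOfFinOrder.2 hz_inf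
  obtain ⟨B, hB⟩ := ((hF.preimage hinj.injOn).image Int.natAbs).bddAbove
  -- `F` meets `⟨z ^ (B + 1)⟩` only in exponents of absolute value `> B`, which do not occur.
  have hle : zpowers (z ^ (B + 1)) ≤ A := (zpowers_le).2 (A.pow_mem hz _)
  have hne : zpowers (z ^ (B + 1)) ≠ ⊥ := by
    rw [Ne, zpowers_eq_bot]
    intro h
    have := @hinj ((B + 1 : ℕ) : ℤ) 0 (by simp only [zpow_natCast, zpow_zero]; exact h)
    omega
  obtain ⟨f, hfF, k, rfl⟩ := hA _ hle hne
  have hk : k ≠ 0 := by rintro rfl; exact hF1 (by simpa using hfF)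
  have hmem : ((B + 1 : ℕ) * k : ℤ) ∈ (z ^ · : ℤ → G) ⁻¹' F := by
    rwa [Set.mem_preimage, zpow_mul, zpow_natCast]
  have := hB ⟨_, hmem, rfl⟩
  rw [Int.natAbs_mul, Int.natAbs_natCast] at this
  nlinarith [Int.natAbs_pos.2 hk]

theorem finite_setOf_pow_prime_eq_one (hF : F.Finite) (hF1 : 1 ∉ F)
    (hA : ∀ S ≤ A, S ≠ ⊥ → ∃ f ∈ F, f ∈ S) {p : ℕ} (hp : p.Prime) :
    {z | z ∈ A ∧ z ^ p = 1}.Finite := by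
  have := Fact.mk hp
  -- an element `z` of order `p` generates the same subgroup as the element of `F` it contains
  have hsub : {z | z ∈ A ∧ z ^ p = 1} ⊆
      insert 1 (⋃ f ∈ {f ∈ F | f ^ p = 1}, (zpowers f : Set G)) := by
    rintro z ⟨hzA, hzp⟩
    rcases eq_or_ne z 1 with rfl | hz1
    · exact Set.mem_insert _ _
    obtain ⟨f, hfF, k, rfl⟩ := hA _ ((zpowers_le).2 hzA) (by rwa [Ne, zpowers_eq_bot])
    have hf1 : z ^ k ≠ 1 := fun h => hF1 (h ▸ hfF)
    have hfp : (z ^ k) ^ p = 1 := by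
      rw [← zpow_natCast, ← zpow_mul, mul_comm, zpow_mul, zpow_natCast, hzp, one_zpow]
    have : Finite (zpowers z) :=
      (finite_zpowers.2 (isOfFinOrder_iff_pow_eq_one.2 ⟨p, hp.pos, hzp⟩)).to_subtype
    have heq : zpowers (z ^ k) = zpowers z :=
      eq_of_le_of_card_ge ((zpowers_le).2 (zpow_mem_zpowers z k))
        (by rw [Nat.card_zpowers, Nat.card_zpowers, orderOf_eq_prime hzp hz1,
          orderOf_eq_prime hfp hf1])
    refine Set.mem_insert_of_mem _ (Set.mem_biUnion (x := z ^ k) ⟨hfF, hfp⟩ ?_)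
    rw [SetLike.mem_coe, heq]
    exact mem_zpowers z
  refine ((hF.subset (Set.sep_subset _ _)).biUnion fun f hf => ?_).insert 1 |>.subset hsub
  exact finite_zpowers.2 (isOfFinOrder_iff_pow_eq_one.2 ⟨p, hp.pos, hf.2⟩)

theorem exists_finite_primes_forall_ne_bot (hF : F.Finite) (hF1 : 1 ∉ F)
    (hA : ∀ S ≤ A, S ≠ ⊥ → ∃ f ∈ F, f ∈ S) :
    ∃ P : Set ℕ, P.Finite ∧ (∀ p ∈ P, p.Prime) ∧
      ∀ S ≤ A, S ≠ ⊥ → ∃ p ∈ P, ∃ z ∈ S, orderOf z = p := by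
  refine ⟨⋃ f ∈ F, ((orderOf f).primeFactors : Set ℕ),
    hF.biUnion fun f _ => Finset.finite_toSet _, fun p hp => ?_, fun S hSA hS => ?_⟩
  · obtain ⟨f, -, hp⟩ := Set.mem_iUnion₂.1 hp
    exact Nat.prime_of_mem_primeFactors hp
  obtain ⟨f, hfF, hfS⟩ := hA S hSA hS
  have hf0 : orderOf f ≠ 0 :=
    (isOfFinOrder_of_forall_ne_bot_exists_mem hF hF1 hA (hSA hfS)).orderOf_pos.ne'
  have hf1 : orderOf f ≠ 1 := fun h => hF1 (orderOf_eq_one_iff.1 h ▸ hfF)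
  have hp := Nat.minFac_prime hf1
  exact ⟨_, Set.mem_biUnion hfF (Nat.mem_primeFactors.2 ⟨hp, Nat.minFac_dvd _, hf0⟩),
    _, S.pow_mem hfS _, orderOf_pow_orderOf_div hf0 (Nat.minFac_dvd _)⟩

end Torsion

theorem FinDisc.of_finite {G : Type*} [Group G] {F : Set G} (hF : F.Finite) (hF1 : 1 ∉ F)
    (h : ∀ N : Subgroup G, N.Normal → N ≠ ⊥ → ∃ g ∈ F, g ∈ N) : FinDisc G :=
  ⟨hF.toFinset, by simpa using hF1, fun N hN hN' => by simpa using h N hN hN'⟩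

theorem FinDisc.exists_finite_of_subgroupOf_normal {G : Type*} [Group G] {K : Subgroup G}
    (hK : FinDisc K) : ∃ F : Set G, F.Finite ∧ 1 ∉ F ∧
      ∀ S ≤ K, S ≠ ⊥ → (S.subgroupOf K).Normal → ∃ f ∈ F, f ∈ S := by
  obtain ⟨F, hF1, hF⟩ := hK
  refine ⟨Subtype.val '' (F : Set K), F.finite_toSet.image _, ?_, fun S hSK hS hSn => ?_⟩
  · rintro ⟨x, hx, hx1⟩
    exact hF1 ((Subtype.ext hx1 : x = 1) ▸ hx)
  · obtain ⟨f, hfF, hfS⟩ :=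
      hF _ hSn (by rwa [Ne, subgroupOf_eq_bot, disjoint_of_le_iff_left_eq_bot hSK])
    exact ⟨f, ⟨f, hfF, rfl⟩, hfS⟩

theorem Subgroup.subgroupOf_normal_of_le_centralizer {G : Type*} [Group G] {S K : Subgroup G}
    (h : S ≤ centralizer (K : Set G)) : (S.subgroupOf K).Normal :=
  ⟨fun n hn g => by
    rw [mem_subgroupOf] at hn ⊢
    simpa [mem_centralizer_iff.1 (h hn) g g.2] using hn⟩

section MinimalNormal

variable {Q : Type*} [Group Q]

theorem FinDisc.exists_finite_set_normal (hQ : FinDisc Q) :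
    ∃ 𝓝 : Set (Subgroup Q), 𝓝.Finite ∧ (∀ N ∈ 𝓝, N.Normal ∧ N ≠ ⊥) ∧
      ∀ P : Subgroup Q, P.Normal → P ≠ ⊥ → ∃ N ∈ 𝓝, N ≤ P := by
  obtain ⟨F, hF1, hF⟩ := hQ
  refine ⟨(fun q => normalClosure {q}) '' F, F.finite_toSet.image _, ?_, fun P hP hP1 => ?_⟩
  · rintro _ ⟨q, hqF, rfl⟩
    refine ⟨normalClosure_normal, ?_⟩
    rw [Ne, normalClosure_eq_bot_iff, Set.singleton_subset_singleton]
    exact fun h => hF1 (h ▸ hqF)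
  · obtain ⟨q, hqF, hqP⟩ := hF P hP hP1
    exact ⟨_, ⟨q, hqF, rfl⟩, normalClosure_le_normal (Set.singleton_subset_iff.2 hqP)⟩

theorem FinDisc.exists_minimal_normal_le (hQ : FinDisc Q) {P : Subgroup Q} (hP : P.Normal)
    (hP1 : P ≠ ⊥) : ∃ M, Minimal (fun N : Subgroup Q => N.Normal ∧ N ≠ ⊥) M ∧ M ≤ P := by
  obtain ⟨𝓝, h𝓝, h𝓝_normal, h𝓝_le⟩ := hQ.exists_finite_set_normal
  obtain ⟨N, hN, hNP⟩ := h𝓝_le P hP hP1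
  obtain ⟨M, hMN, hM⟩ := h𝓝.exists_le_minimal hN
  refine ⟨M, ⟨h𝓝_normal M hM.prop, fun N' hN' hN'M => ?_⟩, hMN.trans hNP⟩
  obtain ⟨N'', hN'', hN''N'⟩ := h𝓝_le N' hN'.1 hN'.2
  exact (hM.2 hN'' (hN''N'.trans hN'M)).trans hN''N'

theorem FinDisc.finite_setOf_minimal_normal (hQ : FinDisc Q) :
    {M | Minimal (fun N : Subgroup Q => N.Normal ∧ N ≠ ⊥) M}.Finite := by
  obtain ⟨𝓝, h𝓝, h𝓝_normal, h𝓝_le⟩ := hQ.exists_finite_set_normal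
  refine h𝓝.subset fun M hM => ?_
  replace hM : Minimal (fun N : Subgroup Q => N.Normal ∧ N ≠ ⊥) M := hM
  obtain ⟨N, hN, hNM⟩ := h𝓝_le M hM.prop.1 hM.prop.2
  exact hM.eq_of_le (h𝓝_normal N hN) hNM ▸ hN

end MinimalNormal

theorem Subgroup.injOn_mul_of_disjoint {G : Type*} [Group G] {H₁ H₂ : Subgroup G}
    (h : Disjoint H₁ H₂) :
    Set.InjOn (fun q : G × G => q.1 * q.2) ((H₁ : Set G) ×ˢ (H₂ : Set G)) := by
  rintro ⟨a, b⟩ ⟨ha, hb⟩ ⟨a', b'⟩ ⟨ha', hb'⟩ e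
  have :=
    mul_injective_of_disjoint h (a₁ := (⟨a, ha⟩, ⟨b, hb⟩)) (a₂ := (⟨a', ha'⟩, ⟨b', hb'⟩)) e
  simp only [Prod.mk.injEq, Subtype.mk.injEq] at this
  rw [this.1, this.2]

theorem Subgroup.exists_mul_eq_of_mem_sup_of_pow_eq_one {G : Type*} [Group G]
    {H₁ H₂ : Subgroup G} [H₁.Normal] [H₂.Normal] (h : Disjoint H₁ H₂) {g : G}
    (hg : g ∈ H₁ ⊔ H₂) {n : ℕ} (hgn : g ^ n = 1) :
    ∃ a ∈ H₁, ∃ b ∈ H₂, a * b = g ∧ a ^ n = 1 ∧ b ^ n = 1 := by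
  obtain ⟨a, ha, b, hb, rfl⟩ := mem_sup_of_normal_left.1 hg
  rw [(commute_of_normal_of_disjoint _ _ ‹_› ‹_› h a b ha hb).mul_pow] at hgn
  have han : a ^ n = 1 :=
    disjoint_def.1 h (pow_mem ha n) (eq_inv_of_mul_eq_one_left hgn ▸ inv_mem (pow_mem hb n))
  rw [han, one_mul] at hgn
  exact ⟨a, ha, b, hb, rfl, han, hgn⟩

section Lift

variable {G : Type*} [Group G] {K : Subgroup G} [K.Normal]

structure IsNormalLift (K : Subgroup G) [K.Normal] (M : Subgroup (G ⧸ K)) (L : Subgroup G) :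
    Prop where
  normal : L.Normal
  disjoint : Disjoint L K
  map_eq : L.map (QuotientGroup.mk' K) = M

namespace IsNormalLift

variable {M : Subgroup (G ⧸ K)} {L L' : Subgroup G}

theorem of_inf_comap {N : Subgroup G} (hN : N.Normal) (hNK : Disjoint N K) (hM : M.Normal)
    (hMN : M ≤ N.map (QuotientGroup.mk' K)) :
    IsNormalLift K M (N ⊓ M.comap (QuotientGroup.mk' K)) where
  normal := @normal_inf_normal _ _ _ _ hN (hM.comap _)
  disjoint := hNK.mono_left inf_le_left
  map_eq := by
    refine le_antisymm ((map_mono inf_le_right).trans (map_comap_le _ M)) fun m hm => ?_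
    obtain ⟨n, hn, rfl⟩ := hMN hm
    exact ⟨n, ⟨hn, hm⟩, rfl⟩

theorem ne_bot (hL : IsNormalLift K M L) (hM : M ≠ ⊥) : L ≠ ⊥ := by
  rintro rfl
  exact hM (hL.map_eq ▸ map_bot _)

theorem le_centralizer (hL : IsNormalLift K M L) : L ≤ centralizer (K : Set G) := fun x hx =>
  mem_centralizer_iff.2 fun k hk =>
    (commute_of_normal_of_disjoint _ _ hL.normal ‹_› hL.disjoint x k hx hk).symm.eq

theorem eq_of_le (hL : IsNormalLift K M L) (hL' : IsNormalLift K M L') (h : L ≤ L') :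
    L = L' := by
  refine le_antisymm h fun a ha => ?_
  have hL'L : L' ≤ L ⊔ K := by
    rw [← QuotientGroup.ker_mk' K, ← Subgroup.map_le_map_iff, hL.map_eq, hL'.map_eq]
  obtain ⟨b, hb, k, hk, rfl⟩ := mem_sup_of_normal_right.1 (hL'L ha)
  have hk1 : k = 1 :=
    disjoint_def.1 hL'.disjoint (by simpa using mul_mem (inv_mem (h hb)) ha) hk
  simpa [hk1] using hb

theorem disjoint_of_ne (hM : Minimal (fun N : Subgroup (G ⧸ K) => N.Normal ∧ N ≠ ⊥) M)
    (hL : IsNormalLift K M L) (hL' : IsNormalLift K M L') (hne : L ≠ L') : Disjoint L L' := by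
  have := hL.normal
  have := hL'.normal
  rcases eq_or_ne ((L ⊓ L').map (QuotientGroup.mk' K)) ⊥ with h | h
  · rw [Subgroup.map_eq_bot_iff, QuotientGroup.ker_mk'] at h
    exact disjoint_iff_inf_le.2 ((le_inf inf_le_left h).trans hL.disjoint.le_bot)
  · have hI : IsNormalLift K M (L ⊓ L') :=
      ⟨inferInstance, hL.disjoint.mono_left inf_le_left, hM.eq_of_le
        ⟨(normal_inf_normal L L').map _ (QuotientGroup.mk'_surjective K), h⟩
        ((map_mono inf_le_left).trans hL.map_eq.le)⟩
    exact absurd ((hI.eq_of_le hL inf_le_left).symm.trans (hI.eq_of_le hL' inf_le_right)) hne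

theorem sup_inf_ne_bot (hL : IsNormalLift K M L) (hL' : IsNormalLift K M L') (hne : L ≠ L') :
    (L ⊔ L') ⊓ K ≠ ⊥ := by
  intro h
  have := hL.normal
  have := hL'.normal
  have hsup : IsNormalLift K M (L ⊔ L') :=
    ⟨inferInstance, disjoint_iff.2 h, by rw [Subgroup.map_sup, hL.map_eq, hL'.map_eq, sup_idem]⟩
  exact hne ((hL.eq_of_le hsup le_sup_left).trans (hL'.eq_of_le hsup le_sup_right).symm)

theorem finite_setOf_pow_eq_one (hL : IsNormalLift K M L) (hL' : IsNormalLift K M L')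
    (h : Disjoint L L') {p : ℕ} (hfin : {z | z ∈ (L ⊔ L') ⊓ K ∧ z ^ p = 1}.Finite) :
    {b | b ∈ L' ∧ b ^ p = 1}.Finite := by
  set X := ((L : Set G) ×ˢ (L' : Set G)) ∩
    (fun q => q.1 * q.2) ⁻¹' {z | z ∈ (L ⊔ L') ⊓ K ∧ z ^ p = 1}
  have hX : X.Finite :=
    Set.Finite.of_finite_image
      (hfin.subset
        ((Set.image_mono Set.inter_subset_right).trans (Set.image_preimage_subset _ _)))
      ((injOn_mul_of_disjoint h).mono Set.inter_subset_left)
  refine (hX.image Prod.snd).subset fun b ⟨hb, hbp⟩ => ?_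
  obtain ⟨a, ha, hab⟩ : ∃ a ∈ L, QuotientGroup.mk' K a = QuotientGroup.mk' K b⁻¹ := by
    rw [← mem_map, hL.map_eq, ← hL'.map_eq]
    exact mem_map_of_mem _ (inv_mem hb)
  have habK : a * b ∈ K := by
    rw [← QuotientGroup.ker_mk' K, MonoidHom.mem_ker, map_mul, hab, map_inv, inv_mul_cancel]
  have hap : a ^ p = 1 := disjoint_def.1 hL.disjoint (pow_mem ha p) (by
    rw [← QuotientGroup.ker_mk' K, MonoidHom.mem_ker, map_pow, hab, ← map_pow, inv_pow, hbp,
      inv_one, map_one])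
  have hcomm := commute_of_normal_of_disjoint _ _ hL.normal hL'.normal h a b ha hb
  exact ⟨(a, b), ⟨⟨ha, hb⟩, mem_inf.2 ⟨mul_mem_sup ha hb, habK⟩,
    by rw [hcomm.mul_pow, hap, hbp, one_mul]⟩, rfl⟩

end IsNormalLift

end Lift

section Extension

variable {G : Type*} [Group G] {K : Subgroup G} [K.Normal] {M : Subgroup (G ⧸ K)}

theorem FinDisc.exists_finite_forall_isNormalLift_ne (hK : FinDisc K)
    (hM : Minimal (fun N : Subgroup (G ⧸ K) => N.Normal ∧ N ≠ ⊥) M) {L₀ L₁ : Subgroup G}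
    (hL₀ : IsNormalLift K M L₀) (hL₁ : IsNormalLift K M L₁) (hne : L₁ ≠ L₀) :
    ∃ Φ : Set G, Φ.Finite ∧ 1 ∉ Φ ∧ ∀ L, IsNormalLift K M L → L ≠ L₀ → ∃ g ∈ Φ, g ∈ L := by
  obtain ⟨F, hF, hF1, hFK⟩ := hK.exists_finite_of_subgroupOf_normal
  have hZ : ∀ S ≤ K ⊓ centralizer (K : Set G), S ≠ ⊥ → ∃ f ∈ F, f ∈ S := fun S hS hS1 =>
    hFK S (hS.trans inf_le_left) hS1
      (subgroupOf_normal_of_le_centralizer (hS.trans inf_le_right))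
  obtain ⟨P, hP, hP_prime, hP_mem⟩ := exists_finite_primes_forall_ne_bot hF hF1 hZ
  have hD : ∀ {L}, IsNormalLift K M L → (L ⊔ L₀) ⊓ K ≤ K ⊓ centralizer (K : Set G) :=
    fun hL => by
      rw [inf_comm]
      exact inf_le_inf_left _ (sup_le hL.le_centralizer hL₀.le_centralizer)
  -- a lift `L ≠ L₀` contains an element `f * m⁻¹ ≠ 1` of some order `p ∈ P`,
  -- with `f` central in `K` and `m ∈ L₀`
  refine ⟨(⋃ p ∈ P, {z | z ∈ K ⊓ centralizer (K : Set G) ∧ z ^ p = 1} *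
    {m | m ∈ L₀ ∧ m ^ p = 1}) \ {1}, ?_, fun h => h.2 rfl, fun L hL hLne => ?_⟩
  · refine (hP.biUnion fun p hp => ?_).sdiff
    have hp := hP_prime p hp
    refine (finite_setOf_pow_prime_eq_one hF hF1 hZ hp).mul
      (hL₁.finite_setOf_pow_eq_one hL₀ (hL₁.disjoint_of_ne hM hL₀ hne) ?_)
    exact (finite_setOf_pow_prime_eq_one hF hF1 hZ hp).subset fun z hz => ⟨hD hL₁ hz.1, hz.2⟩
  · obtain ⟨p, hp, f, hfD, hfp⟩ := hP_mem _ (hD hL) (hL.sup_inf_ne_bot hL₀ hLne)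
    have := hL.normal
    have := hL₀.normal
    obtain ⟨n, hn, m, hm, rfl, hnp, hmp⟩ := exists_mul_eq_of_mem_sup_of_pow_eq_one
      (hL.disjoint_of_ne hM hL₀ hLne) (mem_inf.1 hfD).1 (hfp ▸ pow_orderOf_eq_one _)
    refine ⟨n, ⟨Set.mem_biUnion hp ⟨n * m, ⟨hD hL hfD, hfp ▸ pow_orderOf_eq_one _⟩, m⁻¹,
      ⟨inv_mem hm, by rw [inv_pow, hmp, inv_one]⟩, by group⟩, fun hn1 => ?_⟩, hn⟩
    rw [Set.mem_singleton_iff.1 hn1, one_mul] at hfp hfD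
    rw [disjoint_def.1 hL₀.disjoint hm (mem_inf.1 hfD).2, orderOf_one] at hfp
    exact (hP_prime p hp).one_lt.ne hfp

theorem FinDisc.exists_finite_forall_isNormalLift (hK : FinDisc K)
    (hM : Minimal (fun N : Subgroup (G ⧸ K) => N.Normal ∧ N ≠ ⊥) M) :
    ∃ Φ : Set G, Φ.Finite ∧ 1 ∉ Φ ∧ ∀ L, IsNormalLift K M L → ∃ g ∈ Φ, g ∈ L := by
  by_cases h₀ : ∃ L₀, IsNormalLift K M L₀
  swap
  · exact ⟨∅, Set.finite_empty, id, fun L hL => absurd ⟨L, hL⟩ h₀⟩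
  obtain ⟨L₀, hL₀⟩ := h₀
  obtain ⟨x₀, hx₀1⟩ := ne_bot_iff_exists_ne_one.1 (hL₀.ne_bot hM.prop.2)
  obtain ⟨Φ, hΦ, hΦ1, hΦL⟩ :
      ∃ Φ : Set G, Φ.Finite ∧ 1 ∉ Φ ∧ ∀ L, IsNormalLift K M L → L ≠ L₀ → ∃ g ∈ Φ, g ∈ L := by
    by_cases h₁ : ∃ L₁, IsNormalLift K M L₁ ∧ L₁ ≠ L₀
    · obtain ⟨L₁, hL₁, hne⟩ := h₁
      exact hK.exists_finite_forall_isNormalLift_ne hM hL₀ hL₁ hne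
    · exact ⟨∅, Set.finite_empty, id, fun L hL hne => absurd ⟨L, hL, hne⟩ h₁⟩
  refine ⟨insert (x₀ : G) Φ, hΦ.insert _, ?_, fun L hL => ?_⟩
  · rintro (h | h)
    · exact hx₀1 (Subtype.ext h.symm)
    · exact hΦ1 h
  · rcases eq_or_ne L L₀ with rfl | hne
    · exact ⟨x₀, Set.mem_insert _ _, x₀.2⟩
    · obtain ⟨g, hg, hgL⟩ := hΦL L hL hne
      exact ⟨g, Set.mem_insert_of_mem _ hg, hgL⟩

end Extension

/-- The class of finitely discriminable groups is closed under extensions: if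
`K ⊴ G` with both `K` and `G/K` finitely discriminable, then so is `G`. -/
theorem finDisc_of_extension {G : Type*} [Group G] (K : Subgroup G)
    [hK : K.Normal] (h1 : FinDisc K) (h2 : FinDisc (G ⧸ K)) : FinDisc G := by
  obtain ⟨FK, hFK, hFK1, hFK_meets⟩ := h1.exists_finite_of_subgroupOf_normal
  choose! Φ hΦ hΦ1 hΦ_meets using fun M
    (hM : Minimal (fun N : Subgroup (G ⧸ K) => N.Normal ∧ N ≠ ⊥) M) =>
      h1.exists_finite_forall_isNormalLift hM
  refine FinDisc.of_finite (hFK.union (h2.finite_setOf_minimal_normal.biUnion hΦ)) ?_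
    fun N hN hN1 => ?_
  · rintro (h | h)
    · exact hFK1 h
    · obtain ⟨M, hM, h⟩ := Set.mem_iUnion₂.1 h
      exact hΦ1 M hM h
  by_cases hNK : Disjoint N K
  · have hNmap : N.map (QuotientGroup.mk' K) ≠ ⊥ := by
      rw [Ne, Subgroup.map_eq_bot_iff, QuotientGroup.ker_mk']
      exact fun h => hN1 ((disjoint_of_le_iff_left_eq_bot h).1 hNK)
    obtain ⟨M, hM, hMN⟩ :=
      h2.exists_minimal_normal_le (hN.map _ (QuotientGroup.mk'_surjective K)) hNmap
    obtain ⟨g, hg, hgN⟩ := hΦ_meets M hM _ (IsNormalLift.of_inf_comap hN hNK hM.prop.1 hMN)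
    exact ⟨g, Or.inr (Set.mem_biUnion hM hg), (mem_inf.1 hgN).1⟩
  · obtain ⟨f, hf, hfN⟩ := hFK_meets (N ⊓ K) inf_le_right (by rwa [Ne, ← disjoint_iff])
      (by rw [inf_subgroupOf_right]; exact @normal_subgroupOf _ _ _ _ hN)
    exact ⟨f, Or.inl hf, (mem_inf.1 hfN).1⟩
end

section
/- If a group G has a finitely discriminable subgroup H of finite index, then G is finitely discriminable. -/
section Aux

variable {G : Type*} [Group G]

/-- A normal subgroup disjoint from a finite-index subgroup is finite. -/
lemma FinDiscAux.finite_of_disjoint (H N : Subgroup G) (hfi : H.FiniteIndex)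
    (hd : Disjoint N H) : Finite N := by
  haveI := hfi
  haveI : Finite (G ⧸ H) := inferInstance
  refine Finite.of_injective (fun n : N => ((n : G) : G ⧸ H)) ?_
  rintro ⟨a, ha⟩ ⟨b, hb⟩ hab
  simp only [QuotientGroup.eq] at hab
  have hN : a⁻¹ * b ∈ N := N.mul_mem (N.inv_mem ha) hb
  have h1 : a⁻¹ * b = 1 := Subgroup.disjoint_def.mp hd hN hab
  exact Subtype.ext (inv_mul_eq_one.mp h1)

lemma FinDiscAux.bot_normal : (⊥ : Subgroup G).Normal :=
  ⟨fun x hx g => by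
    rw [Subgroup.mem_bot] at hx ⊢
    simp [hx]⟩

/-- Every nontrivial finite normal subgroup contains a minimal nontrivial normal subgroup. -/
lemma FinDiscAux.exists_minimal_normal :
    ∀ (n : ℕ) (N : Subgroup G), (N : Set G).Finite → (N : Set G).ncard ≤ n →
      N.Normal → N ≠ ⊥ →
      ∃ M : Subgroup G, M ≤ N ∧ M.Normal ∧ M ≠ ⊥ ∧
        ∀ N' : Subgroup G, N'.Normal → N' ≠ ⊥ → N' ≤ M → N' = M := by
  intro n
  induction n with
  | zero =>
    intro N hfin hcard _ _
    have : 0 < (N : Set G).ncard := (Set.ncard_pos hfin).mpr ⟨1, N.one_mem⟩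
    omega
  | succ n ih =>
    intro N hfin hcard hNnormal hNne
    by_cases hmin : ∀ N' : Subgroup G, N'.Normal → N' ≠ ⊥ → N' ≤ N → N' = N
    · exact ⟨N, le_rfl, hNnormal, hNne, hmin⟩
    · push_neg at hmin
      obtain ⟨N', hn1, hn2, hn3, hn4⟩ := hmin
      have hss : (N' : Set G) ⊂ (N : Set G) :=
        (Set.ssubset_iff_subset_ne).mpr
          ⟨SetLike.coe_subset_coe.mpr hn3, fun h => hn4 (SetLike.coe_injective h)⟩
      have hlt : (N' : Set G).ncard < (N : Set G).ncard := Set.ncard_lt_ncard hss hfin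
      obtain ⟨M, h1, h2, h3, h4⟩ := ih N' (hfin.subset hss.1) (by omega) hn1 hn2
      exact ⟨M, h1.trans hn3, h2, h3, h4⟩

end Aux

open Pointwise

/-- If a group `G` has a finitely discriminable subgroup `H` of finite index,
then `G` is finitely discriminable. -/
theorem finDisc_of_finiteIndex {G : Type*} [Group G] (H : Subgroup G)
    (hfi : H.FiniteIndex) (hfd : FinDisc H) : FinDisc G := by
  classical
  obtain ⟨F, hF1, hF⟩ := hfd
  have hfinset : ∀ N : Subgroup G, Disjoint N H → (N : Set G).Finite := by
    intro N hd
    have := FinDiscAux.finite_of_disjoint H N hfi hd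
    exact Set.finite_coe_iff.mp this
  set MinD : Set (Subgroup G) :=
    {M | M.Normal ∧ M ≠ ⊥ ∧ Disjoint M H ∧
      ∀ N' : Subgroup G, N'.Normal → N' ≠ ⊥ → N' ≤ M → N' = M} with hMinDdef
  -- The key finiteness claim
  have hMinDfin : MinD.Finite := by
    by_contra hinf
    -- a choice function: given any finite subgroup, a minimal normal not inside it
    have hchoice : ∀ P : Subgroup G,
        ∃ M : Subgroup G, M ∈ MinD ∧ ((P : Set G).Finite → ¬ M ≤ P) := by
      intro P
      by_cases hP : (P : Set G).Finite
      · have h1 : {M : Subgroup G | M ≤ P}.Finite := by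
          have h2 : {M : Subgroup G | M ≤ P} ⊆
              SetLike.coe ⁻¹' {s : Set G | s ⊆ (P : Set G)} :=
            fun M hM x hx => hM hx
          exact ((hP.finite_subsets).preimage (SetLike.coe_injective.injOn)).subset h2
        have h3 : ¬ MinD ⊆ {M : Subgroup G | M ≤ P} := fun h => hinf (h1.subset h)
        obtain ⟨M, hM1, hM2⟩ := Set.not_subset.mp h3
        exact ⟨M, hM1, fun _ => hM2⟩
      · have hne : MinD.Nonempty := by
          rw [Set.nonempty_iff_ne_empty]
          intro h
          exact hinf (h ▸ Set.finite_empty)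
        obtain ⟨M, hM⟩ := hne
        exact ⟨M, hM, fun h => absurd h hP⟩
    choose c hc1 hc2 using hchoice
    -- the sequences of minimal normal subgroups and their partial products
    let P : ℕ → Subgroup G := fun n =>
      Nat.rec (motive := fun _ => Subgroup G) (c ⊥) (fun _ Pk => Pk ⊔ c Pk) n
    let f : ℕ → Subgroup G := fun n =>
      Nat.rec (motive := fun _ => Subgroup G) (c ⊥) (fun k _ => c (P k)) n
    have hPs : ∀ k, P (k + 1) = P k ⊔ f (k + 1) := fun k => rfl
    have hfMinD : ∀ k, f k ∈ MinD := by
      intro k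
      cases k with
      | zero => exact hc1 ⊥
      | succ k => exact hc1 (P k)
    have hPnormal : ∀ k, (P k).Normal := by
      intro k
      induction k with
      | zero => exact (hc1 ⊥).1
      | succ k ih =>
        rw [hPs k]
        exact @Subgroup.sup_normal G _ (P k) (f (k + 1)) ih (hfMinD (k + 1)).1
    have hPfin : ∀ k, (P k : Set G).Finite := by
      intro k
      induction k with
      | zero => exact hfinset _ (hc1 ⊥).2.2.1
      | succ k ih =>
        rw [hPs k]
        haveI : (f (k + 1)).Normal := (hfMinD (k + 1)).1
        rw [Subgroup.mul_normal]
        exact ih.mul (hfinset _ (hfMinD (k + 1)).2.2.1)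
    have hPmono : Monotone P := by
      apply monotone_nat_of_le_succ
      intro k
      rw [hPs k]
      exact le_sup_left
    have hfnotle : ∀ k, ¬ f (k + 1) ≤ P k := fun k => hc2 (P k) (hPfin k)
    have hfdisjP : ∀ k, f (k + 1) ⊓ P k = ⊥ := by
      intro k
      by_contra hne
      have hnormal : (f (k + 1) ⊓ P k).Normal :=
        @Subgroup.normal_inf_normal G _ (f (k + 1)) (P k) (hfMinD (k + 1)).1 (hPnormal k)
      have heq := (hfMinD (k + 1)).2.2.2 _ hnormal hne inf_le_left
      exact hfnotle k (by rw [← heq]; exact inf_le_right)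
    -- partial tails
    let R : ℕ → ℕ → Subgroup G := fun k t =>
      Nat.rec (motive := fun _ => Subgroup G) ⊥ (fun t Rt => Rt ⊔ f (k + 1 + t)) t
    have hR0 : ∀ k, R k 0 = ⊥ := fun _ => rfl
    have hRs : ∀ k t, R k (t + 1) = R k t ⊔ f (k + 1 + t) := fun _ _ => rfl
    have hRP : ∀ k t, P k ⊔ R k t = P (k + t) := by
      intro k t
      induction t with
      | zero => rw [hR0]; simp
      | succ t ih =>
        rw [hRs, ← sup_assoc, ih]
        have he : k + 1 + t = k + t + 1 := by omega
        rw [he, ← hPs (k + t)]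
        rfl
    have hRnormal : ∀ k t, (R k t).Normal := by
      intro k t
      induction t with
      | zero => rw [hR0]; exact FinDiscAux.bot_normal
      | succ t ih =>
        rw [hRs]
        exact @Subgroup.sup_normal G _ (R k t) (f (k + 1 + t)) ih (hfMinD (k + 1 + t)).1
    have hRmono : ∀ k, Monotone (R k) := by
      intro k
      apply monotone_nat_of_le_succ
      intro t
      rw [hRs]
      exact le_sup_left
    have hRleP : ∀ k t, R k t ≤ P (k + t) := by
      intro k t
      rw [← hRP k t]
      exact le_sup_right
    have hdisj : ∀ k t, P k ⊓ R k t = ⊥ := by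
      intro k t
      induction t with
      | zero => rw [hR0]; exact inf_bot_eq _
      | succ t ih =>
        rw [Subgroup.eq_bot_iff_forall]
        intro x hx
        obtain ⟨hx1, hx2⟩ := Subgroup.mem_inf.mp hx
        rw [hRs] at hx2
        haveI : (f (k + 1 + t)).Normal := (hfMinD (k + 1 + t)).1
        rw [← SetLike.mem_coe, Subgroup.mul_normal] at hx2
        obtain ⟨r, hr, m, hm, hrm⟩ := Set.mem_mul.mp hx2
        have hrR : r ∈ R k t := hr
        have hmf : m ∈ f (k + 1 + t) := hm
        have hmP : m ∈ P (k + t) := by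
          have hxP : x ∈ P (k + t) := hPmono (Nat.le_add_right k t) hx1
          have hrP : r ∈ P (k + t) := hRleP k t hrR
          have hmm : m = r⁻¹ * x := by rw [← hrm]; group
          rw [hmm]
          exact (P (k + t)).mul_mem ((P (k + t)).inv_mem hrP) hxP
        have hm1 : m = 1 := by
          have hmem : m ∈ f (k + 1 + t) ⊓ P (k + t) := Subgroup.mem_inf.mpr ⟨hmf, hmP⟩
          have he : k + 1 + t = k + t + 1 := by omega
          rw [he, hfdisjP (k + t)] at hmem
          exact Subgroup.mem_bot.mp hmem
        have hxr : x = r := by rw [← hrm, hm1, mul_one]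
        have hmem : x ∈ P k ⊓ R k t := Subgroup.mem_inf.mpr ⟨hx1, hxr ▸ hrR⟩
        rw [ih] at hmem
        exact Subgroup.mem_bot.mp hmem
    -- the infinite tails
    let Q : ℕ → Subgroup G := fun k => ⨆ t, R k t
    have hQmem : ∀ k x, x ∈ Q k ↔ ∃ t, x ∈ R k t := fun k x =>
      Subgroup.mem_iSup_of_directed ((hRmono k).directed_le)
    have hQnormal : ∀ k, (Q k).Normal := by
      intro k
      constructor
      intro x hx g
      obtain ⟨t, ht⟩ := (hQmem k x).mp hx
      exact (hQmem k _).mpr ⟨t, (hRnormal k t).conj_mem x ht g⟩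
    have hRleQ : ∀ k t, R k t ≤ Q k := fun k t => le_iSup (R k) t
    have hfleQ : ∀ k i, f (k + 1 + i) ≤ Q k := by
      intro k i
      have h1 : f (k + 1 + i) ≤ R k (i + 1) := by rw [hRs]; exact le_sup_right
      exact h1.trans (hRleQ k (i + 1))
    have hQdec : ∀ k, Q (k + 1) ≤ Q k := by
      intro k
      apply iSup_le
      intro t
      induction t with
      | zero => rw [hR0]; exact bot_le
      | succ t ih =>
        rw [hRs]
        apply sup_le ih
        have he : k + 1 + 1 + t = k + 1 + (1 + t) := by omega
        rw [he]
        exact hfleQ k (1 + t)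
    have hQanti : Antitone Q := antitone_nat_of_succ_le hQdec
    have hQPdisj : ∀ k x, x ∈ Q k → x ∈ P k → x = 1 := by
      intro k x hQ hP
      obtain ⟨t, ht⟩ := (hQmem k x).mp hQ
      have hmem : x ∈ P k ⊓ R k t := Subgroup.mem_inf.mpr ⟨hP, ht⟩
      rw [hdisj k t] at hmem
      exact Subgroup.mem_bot.mp hmem
    have hQnotfin : ∀ k, ¬ (Q k : Set G).Finite := by
      intro k hfinQ
      have hstrict : StrictMono (fun t => Set.ncard (SetLike.coe (R k t))) := by
        apply strictMono_nat_of_lt_succ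
        intro t
        have hss : (SetLike.coe (R k t)) ⊂ (SetLike.coe (R k (t + 1))) := by
          refine (Set.ssubset_iff_subset_ne).mpr
            ⟨SetLike.coe_subset_coe.mpr (hRmono k (Nat.le_succ t)), ?_⟩
          intro hEq
          have hle : R k (t + 1) ≤ R k t :=
            le_of_eq (SetLike.coe_injective hEq.symm)
          have h1 : f (k + 1 + t) ≤ R k t :=
            le_trans (by rw [hRs]; exact le_sup_right) hle
          have h2 : f (k + 1 + t) ≤ P (k + t) := h1.trans (hRleP k t)
          have he : k + 1 + t = k + t + 1 := by omega
          rw [he] at h2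
          exact hfnotle (k + t) h2
        exact Set.ncard_lt_ncard hss
          (hfinQ.subset (SetLike.coe_subset_coe.mpr (hRleQ k (t + 1))))
      have hb : ((R k ((Q k : Set G).ncard + 1) : Set G)).ncard ≤ (Q k : Set G).ncard :=
        Set.ncard_le_ncard (SetLike.coe_subset_coe.mpr (hRleQ k ((Q k : Set G).ncard + 1))) hfinQ
      have hc := hstrict.le_apply (x := (Q k : Set G).ncard + 1)
      omega
    have hexk : ∀ x : G, x ≠ 1 → ∃ k, x ∉ Q k := by
      intro x hx
      by_cases h0 : x ∈ Q 0
      · obtain ⟨t, ht⟩ := (hQmem 0 x).mp h0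
        refine ⟨t, fun hQt => hx ?_⟩
        have hxP : x ∈ P t := by
          have h1 : x ∈ P (0 + t) := hRleP 0 t ht
          rwa [Nat.zero_add] at h1
        exact hQPdisj t x hQt hxP
      · exact ⟨0, h0⟩
    have hexk' : ∀ x : ↥H, ∃ k, (x : G) ≠ 1 → (x : G) ∉ Q k := by
      intro x
      by_cases hx : (x : G) = 1
      · exact ⟨0, fun h => absurd hx h⟩
      · obtain ⟨k, hk⟩ := hexk x hx
        exact ⟨k, fun _ => hk⟩
    choose κ hκ using hexk'
    set k₀ := F.sup κ with hk₀def
    have hFnot : ∀ x ∈ F, (x : G) ∉ Q k₀ := by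
      intro x hxF hmem
      have hx1 : (x : G) ≠ 1 := by
        intro h
        have : x = 1 := OneMemClass.coe_eq_one.mp h
        rw [this] at hxF
        exact hF1 hxF
      exact hκ x hx1 (hQanti (Finset.le_sup hxF) hmem)
    -- Q k₀ is infinite, hence not disjoint from H
    have hnd : ¬ Disjoint (Q k₀) H := by
      intro hd
      exact hQnotfin k₀ (hfinset _ hd)
    have hnall : ¬ ∀ x : G, x ∈ Q k₀ → x ∈ H → x = 1 := fun h =>
      hnd (Subgroup.disjoint_def.mpr fun {x} hx hy => h x hx hy)
    push_neg at hnall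
    obtain ⟨x, hxQ, hxH, hx1⟩ := hnall
    haveI : (Q k₀).Normal := hQnormal k₀
    have hsubne : (Q k₀).subgroupOf H ≠ ⊥ := by
      intro hbot
      have hmem : (⟨x, hxH⟩ : ↥H) ∈ (Q k₀).subgroupOf H :=
        Subgroup.mem_subgroupOf.mpr hxQ
      rw [hbot] at hmem
      exact hx1 (congrArg Subtype.val (Subgroup.mem_bot.mp hmem))
    obtain ⟨g, hgF, hgmem⟩ := hF _ (Subgroup.normal_subgroupOf) hsubne
    exact hFnot g hgF (Subgroup.mem_subgroupOf.mp hgmem)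
  -- choose a nontrivial element from each minimal normal subgroup
  have hrep : ∀ M : Subgroup G, ∃ x : G, M ≠ ⊥ → x ∈ M ∧ x ≠ 1 := by
    intro M
    by_cases hM : M = ⊥
    · exact ⟨1, fun h => absurd hM h⟩
    · have h : ∃ x, x ∈ M ∧ x ≠ 1 := by
        by_contra hcon
        push_neg at hcon
        exact hM ((Subgroup.eq_bot_iff_forall M).mpr hcon)
      obtain ⟨x, h1, h2⟩ := h
      exact ⟨x, fun _ => ⟨h1, h2⟩⟩
  choose χ hχ using hrep
  refine ⟨F.image (fun x : ↥H => (x : G)) ∪ hMinDfin.toFinset.image χ, ?_, ?_⟩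
  · -- 1 is not in the discriminating set
    rw [Finset.mem_union]
    rintro (h | h)
    · obtain ⟨f, hf, hf1⟩ := Finset.mem_image.mp h
      have hf1' : (f : G) = 1 := hf1
      have : f = 1 := by exact_mod_cast hf1'
      rw [this] at hf
      exact hF1 hf
    · obtain ⟨M, hM, hM1⟩ := Finset.mem_image.mp h
      have hMmem : M ∈ MinD := hMinDfin.mem_toFinset.mp hM
      exact (hχ M hMmem.2.1).2 hM1
  · -- discrimination
    intro N hN hNbot
    by_cases hd : Disjoint N H
    · have hNfin := hfinset N hd
      obtain ⟨M, hMle, hMnormal, hMne, hMmin⟩ :=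
        FinDiscAux.exists_minimal_normal ((N : Set G).ncard) N hNfin le_rfl hN hNbot
      have hMMinD : M ∈ MinD := ⟨hMnormal, hMne, hd.mono_left hMle, hMmin⟩
      refine ⟨χ M, ?_, hMle ((hχ M hMne).1)⟩
      exact Finset.mem_union_right _
        (Finset.mem_image_of_mem χ (hMinDfin.mem_toFinset.mpr hMMinD))
    · have hne : N.subgroupOf H ≠ ⊥ := by
        intro hbot
        apply hd
        rw [Subgroup.disjoint_def]
        intro x hxN hxH
        have hmem : (⟨x, hxH⟩ : ↥H) ∈ N.subgroupOf H := Subgroup.mem_subgroupOf.mpr hxN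
        rw [hbot] at hmem
        exact congrArg Subtype.val (Subgroup.mem_bot.mp hmem)
      haveI := hN
      obtain ⟨g, hgF, hgN⟩ := hF (N.subgroupOf H) (Subgroup.normal_subgroupOf) hne
      have hgmem2 : (g : G) ∈ F.image (fun x : ↥H => (x : G)) :=
        Finset.mem_image_of_mem _ hgF
      exact ⟨(g : G), Finset.mem_union_left _ hgmem2, Subgroup.mem_subgroupOf.mp hgN⟩
end

section
/- Every group G is approximable by finitely discriminable quotients: the set of normal subgroups N of G such that G/N is finitely discriminable has the trivial subgroup {1} in its closure, in the topology on normal subgroups induced from the product topology on {0,1}^G. Concretely: for every finite subset F of G \ {1}, there exists a normal subgroup N of G with N ∩ F = ∅ and G/N finitely discriminable. -/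
/-- Every group is approximable by finitely discriminable quotients: for every
finite subset `F` of `G \ {1}` there is a normal subgroup `N` of `G` avoiding
`F` such that `G/N` is finitely discriminable. -/
theorem approx_by_finDisc_quotients {G : Type*} [Group G]
    (F : Finset G) (hF : (1 : G) ∉ F) :
    ∃ (N : Subgroup G) (hN : N.Normal),
      (∀ g ∈ F, g ∉ N) ∧
        @FinDisc (G ⧸ N) (@QuotientGroup.Quotient.group G _ N hN) := by
  set S : Set (Subgroup G) := {N | N.Normal ∧ ∀ g ∈ F, g ∉ N} with hS
  have hbot : (⊥ : Subgroup G) ∈ S := by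
    refine ⟨inferInstance, fun g hg hgN => ?_⟩
    rw [Subgroup.mem_bot] at hgN
    exact hF (hgN ▸ hg)
  classical
  obtain ⟨m, -, hmS, hmax⟩ : ∃ m, ⊥ ≤ m ∧ Maximal (· ∈ S) m := by
    refine zorn_le_nonempty₀ S (fun c hcS hc y hy => ?_) ⊥ hbot
    have hcne : c.Nonempty := ⟨y, hy⟩
    have hdir : DirectedOn (· ≤ ·) c := hc.directedOn
    refine ⟨sSup c, ⟨?_, ?_⟩, fun z hz => le_sSup hz⟩
    · constructor
      intro n hn g
      rw [Subgroup.mem_sSup_of_directedOn hcne hdir] at hn ⊢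
      obtain ⟨N, hNc, hnN⟩ := hn
      exact ⟨N, hNc, (hcS hNc).1.conj_mem n hnN g⟩
    · intro g hg hgs
      rw [Subgroup.mem_sSup_of_directedOn hcne hdir] at hgs
      obtain ⟨N, hNc, hgN⟩ := hgs
      exact (hcS hNc).2 g hg hgN
  obtain ⟨hmN, hmF⟩ := hmS
  refine ⟨m, hmN, hmF, ?_⟩
  haveI := hmN
  refine ⟨F.image (QuotientGroup.mk' m), ?_, ?_⟩
  · intro h1
    obtain ⟨g, hg, hg1⟩ := Finset.mem_image.mp h1
    have : g ∈ m := (QuotientGroup.eq_one_iff g).mp hg1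
    exact hmF g hg this
  · intro M hM hMne
    haveI := hM
    set P := M.comap (QuotientGroup.mk' m) with hP
    have hPnormal : P.Normal := hM.comap _
    have hmP : m ≤ P := by
      intro x hx
      simp only [hP, Subgroup.mem_comap]
      rw [QuotientGroup.mk'_apply, (QuotientGroup.eq_one_iff x).mpr hx]
      exact M.one_mem
    have hPne : P ≠ m := by
      intro hEq
      apply hMne
      rw [eq_bot_iff]
      intro x hx
      obtain ⟨g, rfl⟩ := QuotientGroup.mk'_surjective m x
      have : g ∈ P := hx
      rw [hEq] at this
      rw [Subgroup.mem_bot, QuotientGroup.mk'_apply, (QuotientGroup.eq_one_iff g).mpr this]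
    have hPS : P ∉ S := fun hPS => hPne (le_antisymm (hmax hPS hmP) hmP)
    have : ∃ g ∈ F, g ∈ P := by
      by_contra hcon
      push_neg at hcon
      exact hPS ⟨hPnormal, hcon⟩
    obtain ⟨g, hgF, hgP⟩ := this
    exact ⟨QuotientGroup.mk' m g, Finset.mem_image_of_mem _ hgF, hgP⟩
end

section
/- Let X be a faithful transitive G-set, and let W be a non-trivial finitely discriminable group with trivial centre. Then the permutational wreath product W ≀_X G = (⊕_{x∈X} W) ⋊ G is finitely discriminable. -/
/-- The permutation action of `G` on the product `X → W` induced by an action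
of `G` on `X`. -/
def permAction (G X W : Type*) [Group G] [Group W] [MulAction G X] :
    G →* MulAut (X → W) where
  toFun g :=
    { toFun := fun f x => f (g⁻¹ • x)
      invFun := fun f x => f (g • x)
      left_inv := fun f => by funext x; simp [smul_smul]
      right_inv := fun f => by funext x; simp [smul_smul]
      map_mul' := fun f h => rfl }
  map_one' := by ext f x; simp
  map_mul' g h := by ext f x; simp [mul_smul]

/-- The permutational wreath product `W ≀_X G`, realized as the subgroup of the
semidirect product `(X → W) ⋊ G` consisting of pairs whose first component has
finite support; its first components form the direct sum `⊕_{x ∈ X} W`. -/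
def wreathProduct (G X W : Type*) [Group G] [Group W] [MulAction G X] :
    Subgroup ((X → W) ⋊[permAction G X W] G) where
  carrier := {p | {x : X | p.left x ≠ 1}.Finite}
  one_mem' := by
    show ({x : X | (1 : (X → W) ⋊[permAction G X W] G).left x ≠ 1}).Finite
    convert Set.finite_empty
    ext x
    simp
  mul_mem' := by
    intro a b ha hb
    refine Set.Finite.subset
      (ha.union (Set.Finite.preimage
        ((MulAction.injective (β := X) a.right⁻¹).injOn) hb)) ?_
    intro x hx
    simp only [Set.mem_setOf_eq, SemidirectProduct.mul_left, Pi.mul_apply] at hx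
    by_cases h1 : a.left x = 1
    · right
      intro h2
      simp only [Set.mem_preimage, Set.mem_setOf_eq, not_not] at h2
      exact hx (by simp [permAction, h1, h2])
    · exact Or.inl h1
  inv_mem' := by
    intro a ha
    refine Set.Finite.subset
      (Set.Finite.preimage ((MulAction.injective (β := X) a.right).injOn) ha) ?_
    intro x hx
    simp only [Set.mem_setOf_eq, SemidirectProduct.inv_left] at hx
    simp only [Set.mem_preimage, Set.mem_setOf_eq]
    intro h
    exact hx (by simp [permAction, h])

section Aux

open SemidirectProduct

variable {G X W : Type*} [Group G] [Group W] [MulAction G X]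

lemma permAction_apply (g : G) (f : X → W) (y : X) :
    (permAction G X W g) f y = f (g⁻¹ • y) := rfl

/-- The function supported at `x` with value `w`. -/
noncomputable def deltaFun (x : X) (w : W) : X → W :=
  letI := Classical.decEq X
  fun y => if y = x then w else 1

lemma deltaFun_self (x : X) (w : W) : deltaFun x w x = w := by
  simp [deltaFun]

lemma deltaFun_of_ne (x : X) (w : W) {y : X} (h : y ≠ x) : deltaFun x w y = 1 := by
  simp [deltaFun, h]

lemma deltaFun_cases (x : X) (w : W) (y : X) :
    deltaFun x w y = w ∧ y = x ∨ deltaFun x w y = 1 ∧ y ≠ x := by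
  by_cases h : y = x
  · subst h; exact Or.inl ⟨deltaFun_self y w, rfl⟩
  · exact Or.inr ⟨deltaFun_of_ne x w h, h⟩

lemma mem_wreathProduct_iff (p : (X → W) ⋊[permAction G X W] G) :
    p ∈ wreathProduct G X W ↔ {x : X | p.left x ≠ 1}.Finite := Iff.rfl

lemma deltaP_mem (x : X) (w : W) :
    (inl (deltaFun x w) : (X → W) ⋊[permAction G X W] G) ∈ wreathProduct G X W := by
  rw [mem_wreathProduct_iff]
  refine Set.Finite.subset (Set.finite_singleton x) ?_
  intro y hy
  simp only [Set.mem_setOf_eq, left_inl] at hy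
  by_contra hxy
  exact hy (deltaFun_of_ne x w hxy)

/-- `w ↦ δ_x(w)` as a homomorphism `W →* W ≀_X G`. -/
noncomputable def ew (x : X) : W →* wreathProduct G X W where
  toFun w := ⟨inl (deltaFun x w), deltaP_mem x w⟩
  map_one' := by
    ext
    · show deltaFun x (1 : W) _ = _
      rename_i y
      rcases deltaFun_cases x (1 : W) y with ⟨h, _⟩ | ⟨h, _⟩ <;> simp [h]
    · rfl
  map_mul' w v := by
    ext y
    · show deltaFun x (w * v) y = _
      simp only [Subgroup.coe_mul, mul_left, right_inl, left_inl, map_one, MulAut.one_apply,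
        Pi.mul_apply]
      by_cases h : y = x
      · subst h; simp [deltaFun_self]
      · simp [deltaFun_of_ne _ _ h]
    · show (1 : G) = 1 * 1
      rw [mul_one]

lemma ew_val_left (x : X) (w : W) (y : X) :
    ((ew x w : wreathProduct G X W) : (X → W) ⋊[permAction G X W] G).left y
      = deltaFun x w y := rfl

lemma ew_val_right (x : X) (w : W) :
    ((ew x w : wreathProduct G X W) : (X → W) ⋊[permAction G X W] G).right = 1 := rfl

lemma inr_mem (h : G) :
    (inr h : (X → W) ⋊[permAction G X W] G) ∈ wreathProduct G X W := by
  rw [mem_wreathProduct_iff]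
  convert Set.finite_empty
  ext y
  simp [left_inr]

lemma comm_inl_left (p : (X → W) ⋊[permAction G X W] G) (u : X → W) (y : X) :
    (p * SemidirectProduct.inl u * p⁻¹ * (SemidirectProduct.inl u)⁻¹).left y
      = p.left y * u (p.right⁻¹ • y) * (p.left y)⁻¹ * (u y)⁻¹ := by
  simp only [mul_left, inv_left, mul_right, inv_right, left_inl, right_inl, map_one,
    MulAut.one_apply, Pi.mul_apply, Pi.inv_apply]
  simp [-map_inv, permAction_apply, smul_smul, Pi.inv_apply]

lemma comm_inl_right (p : (X → W) ⋊[permAction G X W] G) (u : X → W) :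
    (p * SemidirectProduct.inl u * p⁻¹ * (SemidirectProduct.inl u)⁻¹).right = 1 := by
  simp [mul_right, inv_right, right_inl]

end Aux

/-- If `X` is a faithful transitive `G`-set and `W` is a non-trivial finitely
discriminable group with trivial centre, then the permutational wreath product
`W ≀_X G = (⊕_{x∈X} W) ⋊ G` is finitely discriminable. -/
theorem finDisc_wreathProduct (G X W : Type*) [Group G] [Group W] [MulAction G X]
    (hfaith : ∀ g : G, (∀ x : X, g • x = x) → g = 1)
    (htrans : ∀ x y : X, ∃ g : G, g • x = y)
    (hW : Nontrivial W) (hfd : FinDisc W)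
    (hZ : Subgroup.center W = ⊥) :
    FinDisc (wreathProduct G X W) := by
  classical
  obtain ⟨F, h1F, hF⟩ := hfd
  by_cases hX : Nonempty X
  case neg =>
    have hXe : IsEmpty X := not_nonempty_iff.mp hX
    have hP : Subsingleton ((X → W) ⋊[permAction G X W] G) :=
      ⟨fun a b => SemidirectProduct.ext (funext fun x => hXe.elim x)
        (by rw [hfaith a.right (fun x => hXe.elim x), hfaith b.right (fun x => hXe.elim x)])⟩
    refine ⟨∅, by simp, fun N hN hNb => absurd ?_ hNb⟩
    ext y
    simp only [Subgroup.mem_bot]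
    constructor
    · intro _
      exact Subtype.ext (Subsingleton.elim _ _)
    · rintro rfl
      exact N.one_mem
  obtain ⟨x₀⟩ := hX
  have key : ∀ N : Subgroup (wreathProduct G X W), N.Normal → N ≠ ⊥ →
      ∃ w : W, w ≠ 1 ∧ ew (G := G) x₀ w ∈ N := by
    intro N hN hNb
    obtain ⟨p, hpN, hp1⟩ := (Subgroup.bot_or_exists_ne_one N).resolve_left hNb
    -- Step B: find an element of N in the base group with nontrivial left part
    have stepB : ∃ b : wreathProduct G X W, b ∈ N ∧ (b : (X → W) ⋊[permAction G X W] G).right = 1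
        ∧ ∃ x : X, (b : (X → W) ⋊[permAction G X W] G).left x ≠ 1 := by
      by_cases hg : (p : (X → W) ⋊[permAction G X W] G).right = 1
      · refine ⟨p, hpN, hg, ?_⟩
        by_contra hall
        push_neg at hall
        exact hp1 (Subtype.ext (SemidirectProduct.ext (funext fun x => hall x) hg))
      · obtain ⟨x, hx⟩ : ∃ x : X, (p : (X → W) ⋊[permAction G X W] G).right • x ≠ x := by
          by_contra hall; push_neg at hall; exact hg (hfaith _ hall)
        obtain ⟨w, hw⟩ := exists_ne (1 : W)
        refine ⟨p * ew (G := G) x w * p⁻¹ * (ew (G := G) x w)⁻¹, ?_, ?_,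
          ⟨(p : (X → W) ⋊[permAction G X W] G).right • x, ?_⟩⟩
        · have h1 : ew (G := G) x w * p⁻¹ * (ew (G := G) x w)⁻¹ ∈ N :=
            hN.conj_mem _ (N.inv_mem hpN) _
          simpa [mul_assoc] using N.mul_mem hpN h1
        · show ((p * ew (G := G) x w * p⁻¹ * (ew (G := G) x w)⁻¹ :
              wreathProduct G X W) : (X → W) ⋊[permAction G X W] G).right = 1
          push_cast [Subgroup.coe_mul, Subgroup.coe_inv]
          exact comm_inl_right _ _
        · show ((p * ew (G := G) x w * p⁻¹ * (ew (G := G) x w)⁻¹ :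
              wreathProduct G X W) : (X → W) ⋊[permAction G X W] G).left _ ≠ 1
          push_cast [Subgroup.coe_mul, Subgroup.coe_inv]
          rw [show ((ew (G := G) x w : wreathProduct G X W) :
            (X → W) ⋊[permAction G X W] G) = SemidirectProduct.inl (deltaFun x w) from rfl]
          rw [comm_inl_left]
          rw [deltaFun_of_ne x w hx, inv_smul_smul, deltaFun_self]
          simp [hw]
    obtain ⟨b, hbN, hbr, x, hbx⟩ := stepB
    -- Step C: commutate with a delta to get a delta in N
    set a : X → W := (b : (X → W) ⋊[permAction G X W] G).left with ha
    obtain ⟨w, hw⟩ : ∃ w : W, a x * w ≠ w * a x := by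
      by_contra hall
      push_neg at hall
      exact hbx (by simpa [hZ, Subgroup.mem_bot] using
        (Subgroup.mem_center_iff.mpr fun g => (hall g).symm : a x ∈ Subgroup.center W))
    set c₀ : W := a x * w * (a x)⁻¹ * w⁻¹ with hc₀
    have hc₀1 : c₀ ≠ 1 := by
      intro h
      have h2 : a x * w * (a x)⁻¹ * w⁻¹ * w * a x = 1 * w * a x := by rw [← hc₀, h]
      exact hw (by simpa [mul_assoc] using h2)
    have hdN : b * ew (G := G) x w * b⁻¹ * (ew (G := G) x w)⁻¹ ∈ N := by
      have h1 : ew (G := G) x w * b⁻¹ * (ew (G := G) x w)⁻¹ ∈ N :=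
        hN.conj_mem _ (N.inv_mem hbN) _
      simpa [mul_assoc] using N.mul_mem hbN h1
    have hd : b * ew (G := G) x w * b⁻¹ * (ew (G := G) x w)⁻¹ = ew (G := G) x c₀ := by
      apply Subtype.ext
      push_cast [Subgroup.coe_mul, Subgroup.coe_inv]
      rw [show ((ew (G := G) x w : wreathProduct G X W) :
        (X → W) ⋊[permAction G X W] G) = SemidirectProduct.inl (deltaFun x w) from rfl]
      apply SemidirectProduct.ext
      · funext y
        rw [comm_inl_left]
        show _ = deltaFun x c₀ y
        rw [hbr]
        simp only [inv_one, one_smul]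
        by_cases hy : y = x
        · subst hy
          rw [deltaFun_self, deltaFun_self, ← ha]
        · rw [deltaFun_of_ne _ _ hy, deltaFun_of_ne _ _ hy, ← ha]
          simp [deltaFun_of_ne _ _ hy]
      · rw [comm_inl_right]
        rfl
    -- Step D: translate x to x₀
    obtain ⟨h, hh⟩ := htrans x x₀
    set q : wreathProduct G X W := ⟨SemidirectProduct.inr h, inr_mem h⟩ with hq
    have hqd : q * ew (G := G) x c₀ * q⁻¹ ∈ N := by
      rw [← hd]
      exact hN.conj_mem _ hdN q
    have hqd' : q * ew (G := G) x c₀ * q⁻¹ = ew (G := G) x₀ c₀ := by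
      apply Subtype.ext
      push_cast [Subgroup.coe_mul, Subgroup.coe_inv]
      rw [show ((ew (G := G) x c₀ : wreathProduct G X W) :
        (X → W) ⋊[permAction G X W] G) = SemidirectProduct.inl (deltaFun x c₀) from rfl]
      rw [show ((ew (G := G) x₀ c₀ : wreathProduct G X W) :
        (X → W) ⋊[permAction G X W] G) = SemidirectProduct.inl (deltaFun x₀ c₀) from rfl]
      rw [← map_inv, ← SemidirectProduct.inl_aut]
      congr 1
      funext y
      rw [permAction_apply]
      by_cases hy : y = x₀
      · rw [hy, deltaFun_self, show h⁻¹ • x₀ = x from by rw [← hh, inv_smul_smul],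
          deltaFun_self]
      · rw [deltaFun_of_ne _ _ hy, deltaFun_of_ne]
        intro hcon
        exact hy (by rw [← hh, ← hcon, smul_inv_smul])
    exact ⟨c₀, hc₀1, hqd' ▸ hqd⟩
  refine ⟨F.image (fun f => ew (G := G) x₀ f), ?_, ?_⟩
  · intro hmem
    obtain ⟨f, hfF, hf⟩ := Finset.mem_image.mp hmem
    have h2 : deltaFun x₀ f x₀ = (1 : W) := by
      rw [show deltaFun x₀ f = ((ew (G := G) x₀ f : wreathProduct G X W) :
        (X → W) ⋊[permAction G X W] G).left from rfl, hf]
      rfl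
    rw [deltaFun_self] at h2
    exact h1F (h2 ▸ hfF)
  · intro N hN hNb
    obtain ⟨w, hw1, hwN⟩ := key N hN hNb
    have hM : Subgroup.comap (ew (G := G) x₀ : W →* wreathProduct G X W) N ≠ ⊥ := by
      rw [Subgroup.ne_bot_iff_exists_ne_one]
      refine ⟨⟨w, hwN⟩, ?_⟩
      intro hcon
      apply hw1
      simpa using congrArg Subtype.val hcon
    obtain ⟨f, hfF, hfN⟩ := hF _ (hN.comap _) hM
    exact ⟨ew (G := G) x₀ f, Finset.mem_image_of_mem _ hfF, hfN⟩
end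

section
/- Let G be a group, Z(K) the centre of a normal subgroup K of G, and let M be a normal subgroup of G with M ∩ K = 1, whose image π(M) in Q = G/K is a minimal normal subgroup of Q. Then the set of normal subgroups of G mapped isomorphically onto π(M) by π is in bijection with the set of G-equivariant group homomorphisms from π(M) to Z(K); moreover each such normal subgroup is a minimal normal subgroup of G. -/
namespace SBEH

open Subgroup QuotientGroup

variable {G : Type*} [Group G] (K : Subgroup G) [K.Normal]

open scoped Classical in
/-- A choice-based section of the quotient map on a subgroup `H`. -/
noncomputable def sec (H : Subgroup G) (x : G ⧸ K) : G :=
  if h : ∃ g, g ∈ H ∧ QuotientGroup.mk' K g = x then h.choose else 1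

variable {K}

theorem sec_mem {H : Subgroup G} {x : G ⧸ K}
    (hx : ∃ g, g ∈ H ∧ QuotientGroup.mk' K g = x) : sec K H x ∈ H := by
  rw [sec, dif_pos hx]; exact hx.choose_spec.1

theorem sec_map {H : Subgroup G} {x : G ⧸ K}
    (hx : ∃ g, g ∈ H ∧ QuotientGroup.mk' K g = x) :
    QuotientGroup.mk' K (sec K H x) = x := by
  rw [sec, dif_pos hx]; exact hx.choose_spec.2

theorem sec_eq {H : Subgroup G} (hinj : ∀ h ∈ H, QuotientGroup.mk' K h = 1 → h = 1)
    {x : G ⧸ K} {g : G} (hg : g ∈ H) (hgx : QuotientGroup.mk' K g = x) :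
    sec K H x = g := by
  have hx : ∃ g, g ∈ H ∧ QuotientGroup.mk' K g = x := ⟨g, hg, hgx⟩
  have h1 : g⁻¹ * sec K H x ∈ H := H.mul_mem (H.inv_mem hg) (sec_mem hx)
  have h2 : QuotientGroup.mk' K (g⁻¹ * sec K H x) = 1 := by
    rw [map_mul, map_inv, sec_map hx, hgx, inv_mul_cancel]
  have h3 := hinj _ h1 h2
  have : g * (g⁻¹ * sec K H x) = g * 1 := by rw [h3]
  simpa [mul_assoc] using this

theorem sec_mul {H : Subgroup G} (hinj : ∀ h ∈ H, QuotientGroup.mk' K h = 1 → h = 1)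
    {x y : G ⧸ K} (hx : ∃ g, g ∈ H ∧ QuotientGroup.mk' K g = x)
    (hy : ∃ g, g ∈ H ∧ QuotientGroup.mk' K g = y) :
    sec K H (x * y) = sec K H x * sec K H y :=
  sec_eq hinj (H.mul_mem (sec_mem hx) (sec_mem hy))
    (by rw [map_mul, sec_map hx, sec_map hy])

theorem sec_conj {H : Subgroup G} (hN : H.Normal)
    (hinj : ∀ h ∈ H, QuotientGroup.mk' K h = 1 → h = 1)
    {x : G ⧸ K} (hx : ∃ g, g ∈ H ∧ QuotientGroup.mk' K g = x) (g : G) :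
    sec K H (QuotientGroup.mk' K g * x * (QuotientGroup.mk' K g)⁻¹)
      = g * sec K H x * g⁻¹ :=
  sec_eq hinj (hN.conj_mem _ (sec_mem hx) g)
    (by rw [map_mul, map_mul, map_inv, sec_map hx])

theorem sec_one {H : Subgroup G} (hinj : ∀ h ∈ H, QuotientGroup.mk' K h = 1 → h = 1) :
    sec K H (1 : G ⧸ K) = 1 :=
  sec_eq hinj H.one_mem (map_one _)

/-- Elements of a normal subgroup meeting `K` trivially commute with `K`. -/
theorem commute_of_inj {H : Subgroup G} (hN : H.Normal)
    (hinj : ∀ h ∈ H, QuotientGroup.mk' K h = 1 → h = 1)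
    {h k : G} (hh : h ∈ H) (hk : k ∈ K) : Commute h k := by
  apply Subgroup.commute_of_normal_of_disjoint H K hN ‹K.Normal› _ _ _ hh hk
  rw [disjoint_iff, eq_bot_iff]
  intro g hg
  have : g = 1 := hinj g hg.1
    (by simpa [QuotientGroup.mk'_apply, QuotientGroup.eq_one_iff] using hg.2)
  simp [this]

variable {M : Subgroup G}

theorem Minj (hMK : M ⊓ K = ⊥) : ∀ h ∈ M, QuotientGroup.mk' K h = 1 → h = 1 := by
  intro h hh h1
  have hk : h ∈ K := by simpa [QuotientGroup.eq_one_iff] using h1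
  have : h ∈ M ⊓ K := ⟨hh, hk⟩
  rw [hMK] at this; simpa using this

theorem exists_sec {H : Subgroup G}
    (hmap : H.map (QuotientGroup.mk' K) = M.map (QuotientGroup.mk' K))
    {x : G ⧸ K} (hx : x ∈ M.map (QuotientGroup.mk' K)) :
    ∃ g, g ∈ H ∧ QuotientGroup.mk' K g = x := by
  rw [← hmap] at hx
  obtain ⟨g, hg, hgx⟩ := hx
  exact ⟨g, hg, hgx⟩

theorem mem_K_of_secs {H : Subgroup G}
    (hmap : H.map (QuotientGroup.mk' K) = M.map (QuotientGroup.mk' K))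
    {x : G ⧸ K} (hx : x ∈ M.map (QuotientGroup.mk' K)) :
    (sec K M x)⁻¹ * sec K H x ∈ K := by
  have h1 : QuotientGroup.mk' K ((sec K M x)⁻¹ * sec K H x) = 1 := by
    rw [map_mul, map_inv, sec_map (exists_sec rfl hx), sec_map (exists_sec hmap hx),
      inv_mul_cancel]
  exact (QuotientGroup.eq_one_iff _).mp h1

/-- The forward map: from a complement-like subgroup `H` to a homomorphism. -/
noncomputable def fwdHom (hM : M.Normal) (hMK : M ⊓ K = ⊥) {H : Subgroup G}
    (hmap : H.map (QuotientGroup.mk' K) = M.map (QuotientGroup.mk' K))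
    (hinj : ∀ h ∈ H, QuotientGroup.mk' K h = 1 → h = 1) :
    ↥(M.map (QuotientGroup.mk' K)) →* G :=
  MonoidHom.mk' (fun x => (sec K M ↑x)⁻¹ * sec K H ↑x) (by
    intro a b
    have hab : ((a * b : ↥(M.map (QuotientGroup.mk' K))) : G ⧸ K) = ↑a * ↑b := rfl
    have h1 : sec K M (↑a * ↑b) = sec K M ↑a * sec K M ↑b :=
      sec_mul (Minj hMK) (exists_sec rfl a.2) (exists_sec rfl b.2)
    have h2 : sec K H (↑a * ↑b) = sec K H ↑a * sec K H ↑b :=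
      sec_mul hinj (exists_sec hmap a.2) (exists_sec hmap b.2)
    have hcomm : Commute ((sec K M ↑a)⁻¹ * sec K H ↑a) (sec K M ↑b)⁻¹ :=
      ((commute_of_inj hM (Minj hMK) (sec_mem (exists_sec rfl b.2))
        (mem_K_of_secs hmap a.2)).symm).inv_right
    show (sec K M (↑a * ↑b))⁻¹ * sec K H (↑a * ↑b)
      = ((sec K M ↑a)⁻¹ * sec K H ↑a) * ((sec K M ↑b)⁻¹ * sec K H ↑b)
    rw [h1, h2]
    calc (sec K M ↑a * sec K M ↑b)⁻¹ * (sec K H ↑a * sec K H ↑b)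
        = (sec K M ↑b)⁻¹ * ((sec K M ↑a)⁻¹ * sec K H ↑a) * sec K H ↑b := by group
      _ = ((sec K M ↑a)⁻¹ * sec K H ↑a) * (sec K M ↑b)⁻¹ * sec K H ↑b := by
          rw [hcomm.symm.eq]
      _ = (sec K M ↑a)⁻¹ * sec K H ↑a * ((sec K M ↑b)⁻¹ * sec K H ↑b) := by group)

theorem fwdHom_mem (hM : M.Normal) (hMK : M ⊓ K = ⊥) {H : Subgroup G} (hN : H.Normal)
    (hmap : H.map (QuotientGroup.mk' K) = M.map (QuotientGroup.mk' K))
    (hinj : ∀ h ∈ H, QuotientGroup.mk' K h = 1 → h = 1)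
    (x : ↥(M.map (QuotientGroup.mk' K))) :
    fwdHom hM hMK hmap hinj x ∈ Subgroup.centralizer (K : Set G) ⊓ K := by
  have hc : (sec K M ↑x)⁻¹ * sec K H ↑x ∈ Subgroup.centralizer (K : Set G) := by
    rw [Subgroup.mem_centralizer_iff]
    intro k hk
    have c1 : Commute (sec K M ↑x)⁻¹ k :=
      (commute_of_inj hM (Minj hMK) (sec_mem (exists_sec rfl x.2)) hk).inv_left
    have c2 : Commute (sec K H ↑x) k :=
      commute_of_inj hN hinj (sec_mem (exists_sec hmap x.2)) hk
    exact ((c1.mul_left c2).symm).eq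
  exact ⟨hc, mem_K_of_secs hmap x.2⟩

theorem fwdHom_equiv (hM : M.Normal) (hMK : M ⊓ K = ⊥) {H : Subgroup G} (hN : H.Normal)
    (hmap : H.map (QuotientGroup.mk' K) = M.map (QuotientGroup.mk' K))
    (hinj : ∀ h ∈ H, QuotientGroup.mk' K h = 1 → h = 1)
    (g : G) (x : G ⧸ K) (hx : x ∈ M.map (QuotientGroup.mk' K))
    (hx' : QuotientGroup.mk' K g * x * (QuotientGroup.mk' K g)⁻¹ ∈
      M.map (QuotientGroup.mk' K)) :
    fwdHom hM hMK hmap hinj ⟨QuotientGroup.mk' K g * x * (QuotientGroup.mk' K g)⁻¹, hx'⟩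
      = g * fwdHom hM hMK hmap hinj ⟨x, hx⟩ * g⁻¹ := by
  show (sec K M _)⁻¹ * sec K H _ = g * ((sec K M x)⁻¹ * sec K H x) * g⁻¹
  rw [sec_conj hM (Minj hMK) (exists_sec rfl hx) g,
    sec_conj hN hinj (exists_sec hmap hx) g]
  group

/-- The backward map: from an equivariant homomorphism to a subgroup (as the
range of this homomorphism). -/
noncomputable def bwdHom (hM : M.Normal) (hMK : M ⊓ K = ⊥)
    (φ : ↥(M.map (QuotientGroup.mk' K)) →* G)
    (hcen : ∀ x, φ x ∈ Subgroup.centralizer (K : Set G) ⊓ K) :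
    ↥(M.map (QuotientGroup.mk' K)) →* G :=
  MonoidHom.mk' (fun x => sec K M ↑x * φ x) (by
    intro a b
    have hab : ((a * b : ↥(M.map (QuotientGroup.mk' K))) : G ⧸ K) = ↑a * ↑b := rfl
    have h1 : sec K M (↑a * ↑b) = sec K M ↑a * sec K M ↑b :=
      sec_mul (Minj hMK) (exists_sec rfl a.2) (exists_sec rfl b.2)
    have hcomm : Commute (φ a) (sec K M ↑b) :=
      (commute_of_inj hM (Minj hMK) (sec_mem (exists_sec rfl b.2)) (hcen a).2).symm
    show sec K M (↑a * ↑b) * φ (a * b) = (sec K M ↑a * φ a) * (sec K M ↑b * φ b)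
    rw [h1, map_mul]
    calc sec K M ↑a * sec K M ↑b * (φ a * φ b)
        = sec K M ↑a * (sec K M ↑b * φ a) * φ b := by group
      _ = sec K M ↑a * (φ a * sec K M ↑b) * φ b := by rw [hcomm.symm.eq]
      _ = sec K M ↑a * φ a * (sec K M ↑b * φ b) := by group)

theorem bwdHom_map (hM : M.Normal) (hMK : M ⊓ K = ⊥)
    (φ : ↥(M.map (QuotientGroup.mk' K)) →* G)
    (hcen : ∀ x, φ x ∈ Subgroup.centralizer (K : Set G) ⊓ K)
    (x : ↥(M.map (QuotientGroup.mk' K))) :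
    QuotientGroup.mk' K (bwdHom hM hMK φ hcen x) = ↑x := by
  show QuotientGroup.mk' K (sec K M ↑x * φ x) = ↑x
  have h1 : QuotientGroup.mk' K (φ x) = 1 := by
    simpa [QuotientGroup.eq_one_iff] using (hcen x).2
  rw [map_mul, sec_map (exists_sec rfl x.2), h1, mul_one]

theorem bwd_inj (hM : M.Normal) (hMK : M ⊓ K = ⊥)
    (φ : ↥(M.map (QuotientGroup.mk' K)) →* G)
    (hcen : ∀ x, φ x ∈ Subgroup.centralizer (K : Set G) ⊓ K) :
    ∀ h ∈ (bwdHom hM hMK φ hcen).range, QuotientGroup.mk' K h = 1 → h = 1 := by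
  rintro h ⟨x, rfl⟩ h1
  rw [bwdHom_map hM hMK φ hcen x] at h1
  have hx1 : x = 1 := Subtype.ext h1
  rw [hx1, map_one]

theorem bwd_map (hM : M.Normal) (hMK : M ⊓ K = ⊥)
    (φ : ↥(M.map (QuotientGroup.mk' K)) →* G)
    (hcen : ∀ x, φ x ∈ Subgroup.centralizer (K : Set G) ⊓ K) :
    (bwdHom hM hMK φ hcen).range.map (QuotientGroup.mk' K)
      = M.map (QuotientGroup.mk' K) := by
  apply le_antisymm
  · rintro y ⟨g, ⟨x, rfl⟩, rfl⟩
    rw [bwdHom_map hM hMK φ hcen x]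
    exact x.2
  · intro y hy
    exact ⟨bwdHom hM hMK φ hcen ⟨y, hy⟩, ⟨⟨y, hy⟩, rfl⟩,
      bwdHom_map hM hMK φ hcen ⟨y, hy⟩⟩

theorem bwd_normal (hM : M.Normal) (hMK : M ⊓ K = ⊥)
    (hπM : (M.map (QuotientGroup.mk' K)).Normal)
    (φ : ↥(M.map (QuotientGroup.mk' K)) →* G)
    (hcen : ∀ x, φ x ∈ Subgroup.centralizer (K : Set G) ⊓ K)
    (hequiv : ∀ (g : G) (x : G ⧸ K) (hx : x ∈ M.map (QuotientGroup.mk' K)),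
      φ ⟨QuotientGroup.mk' K g * x * (QuotientGroup.mk' K g)⁻¹,
          hπM.conj_mem x hx (QuotientGroup.mk' K g)⟩
        = g * φ ⟨x, hx⟩ * g⁻¹) :
    (bwdHom hM hMK φ hcen).range.Normal := by
  constructor
  rintro _ ⟨x, rfl⟩ g
  refine ⟨⟨QuotientGroup.mk' K g * ↑x * (QuotientGroup.mk' K g)⁻¹,
    hπM.conj_mem ↑x x.2 (QuotientGroup.mk' K g)⟩, ?_⟩
  show sec K M _ * φ _ = g * (sec K M ↑x * φ x) * g⁻¹
  rw [sec_conj hM (Minj hMK) (exists_sec rfl x.2) g, hequiv g ↑x x.2]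
  have hx' : (⟨↑x, x.2⟩ : ↥(M.map (QuotientGroup.mk' K))) = x := rfl
  rw [hx']
  group

end SBEH

open SBEH Subgroup in
/-- Let `K ⊴ G`, `π : G → Q = G/K` the quotient map, and `M ⊴ G` with
`M ∩ K = 1` whose image `π(M)` is a minimal normal subgroup of `Q`. Then the
normal subgroups of `G` mapped isomorphically onto `π(M)` by `π` are in
bijection with the `G`-equivariant homomorphisms `π(M) → Z(K)`; moreover each
such normal subgroup is a minimal normal subgroup of `G`. -/
theorem sections_biject_equivariant_homs_and_minimal {G : Type*} [Group G]
    (K M : Subgroup G) [hK : K.Normal] (hM : M.Normal) (hMK : M ⊓ K = ⊥)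
    (hπM : (M.map (QuotientGroup.mk' K)).Normal)
    (hmin_ne : M.map (QuotientGroup.mk' K) ≠ ⊥)
    (hmin : ∀ P : Subgroup (G ⧸ K), P.Normal → P ≠ ⊥ →
      P ≤ M.map (QuotientGroup.mk' K) → P = M.map (QuotientGroup.mk' K)) :
    Nonempty (
      {H : Subgroup G // H.Normal ∧
        H.map (QuotientGroup.mk' K) = M.map (QuotientGroup.mk' K) ∧
        ∀ h ∈ H, QuotientGroup.mk' K h = 1 → h = 1} ≃
      {φ : ↥(M.map (QuotientGroup.mk' K)) →* G //
        (∀ x, φ x ∈ Subgroup.centralizer (K : Set G) ⊓ K) ∧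
        ∀ (g : G) (x : G ⧸ K) (hx : x ∈ M.map (QuotientGroup.mk' K)),
          φ ⟨QuotientGroup.mk' K g * x * (QuotientGroup.mk' K g)⁻¹,
              hπM.conj_mem x hx (QuotientGroup.mk' K g)⟩
            = g * φ ⟨x, hx⟩ * g⁻¹}) ∧
    ∀ H : Subgroup G, H.Normal →
      H.map (QuotientGroup.mk' K) = M.map (QuotientGroup.mk' K) →
      (∀ h ∈ H, QuotientGroup.mk' K h = 1 → h = 1) →
      (H ≠ ⊥ ∧ ∀ N : Subgroup G, N.Normal → N ≠ ⊥ → N ≤ H → N = H) := by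
  -- Abbreviations and basic facts
  have hMinj : ∀ h ∈ M, QuotientGroup.mk' K h = 1 → h = 1 := by
    intro h hh h1
    have hk : h ∈ K := by simpa [QuotientGroup.eq_one_iff] using h1
    have : h ∈ M ⊓ K := ⟨hh, hk⟩
    rw [hMK] at this; simpa using this
  -- existence lemma for a subgroup with the right image
  have hex : ∀ (H : Subgroup G),
      H.map (QuotientGroup.mk' K) = M.map (QuotientGroup.mk' K) →
      ∀ (x : G ⧸ K), x ∈ M.map (QuotientGroup.mk' K) →
      ∃ g, g ∈ H ∧ QuotientGroup.mk' K g = x := by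
    intro H hmap x hx
    rw [← hmap] at hx
    obtain ⟨g, hg, hgx⟩ := hx
    exact ⟨g, hg, hgx⟩
  have hexM : ∀ (x : G ⧸ K), x ∈ M.map (QuotientGroup.mk' K) →
      ∃ g, g ∈ M ∧ QuotientGroup.mk' K g = x := hex M rfl
  constructor
  · refine ⟨{
      toFun := fun H => ⟨fwdHom hM hMK H.2.2.1 H.2.2.2,
        fun x => fwdHom_mem hM hMK H.2.1 H.2.2.1 H.2.2.2 x,
        fun g x hx => fwdHom_equiv hM hMK H.2.1 H.2.2.1 H.2.2.2 g x hx _⟩,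
      invFun := fun φ => ⟨(bwdHom hM hMK φ.1 φ.2.1).range,
        bwd_normal hM hMK hπM φ.1 φ.2.1 φ.2.2,
        bwd_map hM hMK φ.1 φ.2.1,
        bwd_inj hM hMK φ.1 φ.2.1⟩,
      left_inv := ?_,
      right_inv := ?_ }⟩
    · rintro ⟨H, hN, hmap, hinj⟩
      apply Subtype.ext
      show (bwdHom hM hMK (fwdHom hM hMK hmap hinj) _).range = H
      ext g
      constructor
      · rintro ⟨x, rfl⟩
        show sec K M ↑x * ((sec K M ↑x)⁻¹ * sec K H ↑x) ∈ H
        rw [mul_inv_cancel_left]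
        exact sec_mem (exists_sec hmap x.2)
      · intro hg
        refine ⟨⟨QuotientGroup.mk' K g, by
          rw [← hmap]; exact Subgroup.mem_map_of_mem _ hg⟩, ?_⟩
        show sec K M _ * ((sec K M _)⁻¹ * sec K H _) = g
        rw [mul_inv_cancel_left]
        exact sec_eq hinj hg rfl
    · rintro ⟨φ, hcen, hequiv⟩
      apply Subtype.ext
      show fwdHom hM hMK (bwd_map hM hMK φ hcen) (bwd_inj hM hMK φ hcen) = φ
      ext x
      show (sec K M ↑x)⁻¹ * sec K (bwdHom hM hMK φ hcen).range ↑x = φ x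
      have h1 : sec K (bwdHom hM hMK φ hcen).range ↑x = sec K M ↑x * φ x :=
        sec_eq (bwd_inj hM hMK φ hcen) ⟨x, rfl⟩ (bwdHom_map hM hMK φ hcen x)
      rw [h1, inv_mul_cancel_left]
  · -- minimality
    intro H hN hmap hinj
    constructor
    · intro hbot
      apply hmin_ne
      rw [← hmap, hbot, Subgroup.map_bot]
    · intro N hNn hNne hNH
      have hNmap : (N.map (QuotientGroup.mk' K)).Normal :=
        hNn.map _ (QuotientGroup.mk'_surjective K)
      have hNmapne : N.map (QuotientGroup.mk' K) ≠ ⊥ := by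
        intro hb
        apply hNne
        rw [eq_bot_iff]
        intro n hn
        have h1 : QuotientGroup.mk' K n = 1 := by
          have : QuotientGroup.mk' K n ∈ N.map (QuotientGroup.mk' K) :=
            Subgroup.mem_map_of_mem _ hn
          rw [hb] at this; simpa using this
        exact hinj n (hNH hn) h1
      have hNle : N.map (QuotientGroup.mk' K) ≤ M.map (QuotientGroup.mk' K) := by
        rw [← hmap]; exact Subgroup.map_mono hNH
      have heq := hmin _ hNmap hNmapne hNle
      refine le_antisymm hNH ?_
      intro h hh
      have : QuotientGroup.mk' K h ∈ N.map (QuotientGroup.mk' K) := by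
        rw [heq, ← hmap]; exact Subgroup.mem_map_of_mem _ hh
      obtain ⟨n, hn, hnh⟩ := this
      have h1 : n⁻¹ * h ∈ H := H.mul_mem (H.inv_mem (hNH hn)) hh
      have h2 : QuotientGroup.mk' K (n⁻¹ * h) = 1 := by
        rw [map_mul, map_inv, hnh, inv_mul_cancel]
      have h3 := hinj _ h1 h2
      have : n * (n⁻¹ * h) = n * 1 := by rw [h3]
      have h4 : h = n := by simpa [mul_assoc] using this
      rw [h4]; exact hn
end
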